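/- arXiv:1908.02220 — 8 statements merged into one kernel-verified Lean document; each statement's English description precedes it below -/
import Mathlib

section
/- Let b be an even positive integer, c a positive integer, and N a b×c matrix with entries in {0,1} such that every column sum of N equals 0, b, or b/2. Define Ñ to be the matrix obtained from N by replacing each column n whose sum equals b/2 by its complement 1_b − n (and leaving all other columns unchanged). Let B be a symmetric b×b real matrix all of whose row sums are equal, and let C be a symmetric c×c real matrix. Then the block matrices M = [[B, N], [Nᵀ, C]] and M̃ = [[B, Ñ], [Ñᵀ, C]] are cospectral. -/
open Matrix Polynomial

lemma charpoly_conj_self {n : Type*} [Fintype n] [DecidableEq n]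
    (P M : Matrix n n ℝ) (h : P * P = 1) :
    (P * M * P).charpoly = M.charpoly := by
  set P' : Matrix n n ℝ[X] := P.map (C : ℝ →+* ℝ[X]) with hP'
  have hmap : P' * P' = 1 := by
    rw [hP', ← Matrix.map_mul, h, Matrix.map_one _ (map_zero _) (map_one _)]
  have hcomm : Matrix.scalar n (X : ℝ[X]) * P' = P' * Matrix.scalar n (X : ℝ[X]) :=
    (Matrix.scalar_commute (X : ℝ[X]) (fun r' => Commute.all _ _) P')
  have hch : charmatrix (P * M * P) = P' * charmatrix M * P' := by
    unfold charmatrix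
    simp only [RingHom.mapMatrix_apply]
    rw [Matrix.map_mul, Matrix.map_mul]
    rw [mul_sub, sub_mul]
    congr 1
    rw [← hcomm, mul_assoc, hmap, mul_one]
  rw [Matrix.charpoly, Matrix.charpoly, hch, det_mul, det_mul]
  have : P'.det * P'.det = 1 := by rw [← det_mul, hmap, det_one]
  calc P'.det * (charmatrix M).det * P'.det
      = P'.det * P'.det * (charmatrix M).det := by ring
    _ = (charmatrix M).det := by rw [this, one_mul]

theorem GM_matrix_cospectral (b c : ℕ) (hb : 0 < b) (hbe : Even b) (hc : 0 < c)
    (N Ntilde : Matrix (Fin b) (Fin c) ℝ)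
    (hN01 : ∀ i j, N i j = 0 ∨ N i j = 1)
    (hcolsum : ∀ j, (∑ i, N i j) = 0 ∨ (∑ i, N i j) = (b : ℝ) ∨
      (∑ i, N i j) = (b : ℝ) / 2)
    (hNtilde : ∀ i j, Ntilde i j =
      if (∑ k, N k j) = (b : ℝ) / 2 then 1 - N i j else N i j)
    (B : Matrix (Fin b) (Fin b) ℝ) (hB : B.IsSymm)
    (hBrow : ∃ r : ℝ, ∀ i, ∑ j, B i j = r)
    (C : Matrix (Fin c) (Fin c) ℝ) (hC : C.IsSymm) :
    (Matrix.fromBlocks B N Nᵀ C).charpoly =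
      (Matrix.fromBlocks B Ntilde Ntildeᵀ C).charpoly := by
  have hbR : (0:ℝ) < (b:ℝ) := by exact_mod_cast hb
  set J : Matrix (Fin b) (Fin b) ℝ := Matrix.of (fun _ _ => 1) with hJ
  set Q : Matrix (Fin b) (Fin b) ℝ := (2 / (b:ℝ)) • J - 1 with hQ
  have hJJ : J * J = (b:ℝ) • J := by
    ext i j; simp [hJ, Matrix.mul_apply, Matrix.smul_apply]
  have hb0 : (b:ℝ) ≠ 0 := ne_of_gt hbR
  have hQQ : Q * Q = 1 := by
    rw [hQ, sub_mul, mul_sub, mul_sub, smul_mul_smul_comm, hJJ]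
    simp only [Matrix.mul_one, Matrix.one_mul, smul_smul]
    match_scalars <;> field_simp <;> ring
  -- Q * B * Q = B
  obtain ⟨r, hr⟩ := hBrow
  have hBJ : B * J = r • J := by
    ext i j; simp [hJ, Matrix.mul_apply, Matrix.smul_apply, hr i]
  have hJB : J * B = r • J := by
    ext i j
    simp only [hJ, Matrix.mul_apply, Matrix.smul_apply, Matrix.of_apply, one_mul, smul_eq_mul,
      mul_one]
    have := hr j
    rw [← this]
    exact Finset.sum_congr rfl (fun k _ => by rw [← hB.apply k j])
  have hQBQ : Q * B * Q = B := by
    have e1 : Q * B = (2 / (b:ℝ) * r) • J - B := by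
      rw [hQ, sub_mul, Matrix.smul_mul, hJB, Matrix.one_mul, smul_smul]
    rw [e1, hQ]
    simp only [sub_mul, mul_sub, Matrix.smul_mul, Matrix.mul_smul, hJJ, hBJ,
      Matrix.mul_one, smul_smul]
    match_scalars <;> field_simp <;> ring
  -- Q * N = Ntilde
  have hQN : Q * N = Ntilde := by
    ext i j
    have hsum : (Q * N) i j = 2 / (b:ℝ) * (∑ k, N k j) - N i j := by
      simp only [hQ, hJ, Matrix.sub_apply, Matrix.mul_apply, Matrix.smul_apply, Matrix.of_apply,
        smul_eq_mul, mul_one, Matrix.one_apply, sub_mul, ite_mul, one_mul, zero_mul]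
      rw [Finset.sum_sub_distrib, ← Finset.mul_sum]
      congr 1
      simp
    rw [hsum, hNtilde i j]
    rcases hcolsum j with h0 | hb' | hh
    · have hz : N i j = 0 := by
        have := (Finset.sum_eq_zero_iff_of_nonneg (fun k _ => by
          rcases hN01 k j with h | h <;> simp [h])).mp h0
        exact this i (Finset.mem_univ i)
      have hne : ¬ ((0:ℝ) = (b:ℝ)/2) := by
        intro h; have : (0:ℝ) < (b:ℝ)/2 := by positivity
        linarith
      rw [h0, hz, if_neg hne]; ring
    · have hne : ¬ ((b:ℝ) = (b:ℝ)/2) := by intro h; linarith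
      have hone : N i j = 1 := by
        have hsz : ∑ k, (1 - N k j) = 0 := by
          rw [Finset.sum_sub_distrib, hb']; simp
        have := (Finset.sum_eq_zero_iff_of_nonneg (fun k _ => by
          rcases hN01 k j with h | h <;> simp [h])).mp hsz
        have := this i (Finset.mem_univ i)
        linarith
      rw [hb', hone, if_neg hne]
      field_simp
      norm_num
    · rw [hh, if_pos rfl]
      have : 2 / (b:ℝ) * ((b:ℝ)/2) = 1 := by field_simp
      rw [this]
  have hQsymm : Qᵀ = Q := by
    rw [hQ, Matrix.transpose_sub, Matrix.transpose_smul, Matrix.transpose_one]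
    rfl
  have hNQ : Nᵀ * Q = Ntildeᵀ := by
    rw [← hQN, Matrix.transpose_mul, hQsymm]
  -- assemble
  set P : Matrix (Fin b ⊕ Fin c) (Fin b ⊕ Fin c) ℝ := Matrix.fromBlocks Q 0 0 1 with hP
  have hPP : P * P = 1 := by
    rw [hP, Matrix.fromBlocks_multiply]
    simp [hQQ, Matrix.fromBlocks_one]
  have hconj : P * (Matrix.fromBlocks B N Nᵀ C) * P = Matrix.fromBlocks B Ntilde Ntildeᵀ C := by
    rw [hP, Matrix.fromBlocks_multiply, Matrix.fromBlocks_multiply]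
    simp only [Matrix.zero_mul, Matrix.mul_zero, Matrix.mul_one, Matrix.one_mul, add_zero,
      zero_add]
    rw [hQBQ, hQN, hNQ]
  rw [← hconj, charpoly_conj_self _ _ hPP]
end

section
/- Let b be an even positive integer, c a positive integer, and N a b×c matrix with entries in {−1, 0, 1} such that every column n^j of N satisfies one of the following: (i) the entries of n^j sum to 0; (ii) exactly b/2 entries of n^j equal 1 and exactly b/2 entries equal 0; (iii) exactly b/2 entries of n^j equal −1 and exactly b/2 entries equal 0; (iv) n^j = 1_b; (v) n^j = −1_b. Define Ñ to be the matrix obtained from N by replacing each column of type (i) by −n^j, each column of type (ii) by 1_b − n^j, and each column of type (iii) by −1_b − n^j (columns of types (iv) and (v) stay unchanged). Let B be a symmetric b×b real matrix all of whose row sums are equal, and let C be a symmetric c×c real matrix. Then the block matrices M = [[B, N], [Nᵀ, C]] and M̃ = [[B, Ñ], [Ñᵀ, C]] are cospectral. -/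
open scoped Classical
open Matrix
open Polynomial

lemma conj_charpoly {n : Type*} [DecidableEq n] [Fintype n] (Q M : Matrix n n ℝ)
    (h : Q * Q = 1) : (Q * M * Q).charpoly = M.charpoly := by
  have hQc : (C : ℝ →+* ℝ[X]).mapMatrix Q * (C : ℝ →+* ℝ[X]).mapMatrix Q = 1 := by
    rw [← RingHom.map_mul, h, RingHom.map_one]
  have key : charmatrix (Q * M * Q) =
      (C : ℝ →+* ℝ[X]).mapMatrix Q * charmatrix M * (C : ℝ →+* ℝ[X]).mapMatrix Q := by
    rw [charmatrix, charmatrix, mul_sub, sub_mul]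
    congr 1
    · have hcomm : (C : ℝ →+* ℝ[X]).mapMatrix Q * Matrix.scalar n X
          = Matrix.scalar n X * (C : ℝ →+* ℝ[X]).mapMatrix Q :=
        (Matrix.scalar_commute X (fun r' => Commute.all X r') _).symm
      rw [hcomm, mul_assoc, hQc, mul_one]
    · rw [RingHom.map_mul, RingHom.map_mul]
  rw [Matrix.charpoly, Matrix.charpoly, key, det_mul, det_mul]
  have hd : ((C : ℝ →+* ℝ[X]).mapMatrix Q).det * ((C : ℝ →+* ℝ[X]).mapMatrix Q).det = 1 := by
    rw [← det_mul, hQc, det_one]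
  calc ((C : ℝ →+* ℝ[X]).mapMatrix Q).det * (charmatrix M).det * ((C : ℝ →+* ℝ[X]).mapMatrix Q).det
      = ((C : ℝ →+* ℝ[X]).mapMatrix Q).det * ((C : ℝ →+* ℝ[X]).mapMatrix Q).det * (charmatrix M).det := by ring
    _ = (charmatrix M).det := by rw [hd, one_mul]

lemma col_aux {b : ℕ} (v : Fin b → ℝ) (hv : ∀ i, v i = -1 ∨ v i = 0 ∨ v i = 1) :
    (∑ i, v i = ((Finset.univ.filter (fun i => v i = 1)).card : ℝ)
      - ((Finset.univ.filter (fun i => v i = -1)).card : ℝ)) ∧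
    (Finset.univ.filter (fun i => v i = 1)).card + (Finset.univ.filter (fun i => v i = 0)).card
      + (Finset.univ.filter (fun i => v i = -1)).card = b := by
  classical
  constructor
  · have hvi : ∀ i, v i = (if v i = 1 then (1:ℝ) else 0) + (if v i = -1 then (-1:ℝ) else 0) := by
      intro i; rcases hv i with h | h | h <;> rw [h] <;> norm_num
    rw [Finset.sum_congr rfl (fun i _ => hvi i), Finset.sum_add_distrib,
      Finset.sum_ite, Finset.sum_ite]
    simp [Finset.sum_const, sub_eq_add_neg]
  · have hdisj10 : Disjoint (Finset.univ.filter (fun i => v i = 1))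
        (Finset.univ.filter (fun i => v i = 0)) := by
      simp only [Finset.disjoint_filter]; intro x _ h1 h0; rw [h1] at h0; norm_num at h0
    have hdisj : Disjoint (Finset.univ.filter (fun i => v i = 1) ∪
        Finset.univ.filter (fun i => v i = 0)) (Finset.univ.filter (fun i => v i = -1)) := by
      rw [Finset.disjoint_union_left]
      constructor <;> (simp only [Finset.disjoint_filter]; intro x _ h1 h0; rw [h1] at h0; norm_num at h0)
    have huniv : (Finset.univ.filter (fun i => v i = 1) ∪ Finset.univ.filter (fun i => v i = 0))
        ∪ Finset.univ.filter (fun i => v i = -1) = Finset.univ := by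
      ext x
      simp only [Finset.mem_union, Finset.mem_filter, Finset.mem_univ, true_and, iff_true]
      rcases hv x with h | h | h <;> tauto
    have := congrArg Finset.card huniv
    rw [Finset.card_union_of_disjoint hdisj, Finset.card_union_of_disjoint hdisj10,
      Finset.card_univ, Fintype.card_fin] at this
    exact this

theorem GM_signed_matrix_cospectral (b c : ℕ) (hb : 0 < b) (hbe : Even b) (hc : 0 < c)
    (N Ntilde : Matrix (Fin b) (Fin c) ℝ)
    (hNent : ∀ i j, N i j = -1 ∨ N i j = 0 ∨ N i j = 1)
    (hcols : ∀ j,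
      -- (i) entries sum to zero: column is negated
      ((∑ i, N i j) = 0 ∧ ∀ i, Ntilde i j = -N i j) ∨
      -- (ii) half entries `1`, half entries `0`: column is complemented w.r.t. 1
      ((Finset.univ.filter (fun i => N i j = 1)).card = b / 2 ∧
        (Finset.univ.filter (fun i => N i j = 0)).card = b / 2 ∧
        ∀ i, Ntilde i j = 1 - N i j) ∨
      -- (iii) half entries `-1`, half entries `0`: column is complemented w.r.t. -1
      ((Finset.univ.filter (fun i => N i j = -1)).card = b / 2 ∧
        (Finset.univ.filter (fun i => N i j = 0)).card = b / 2 ∧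
        ∀ i, Ntilde i j = -1 - N i j) ∨
      -- (iv) all-ones column: unchanged
      ((∀ i, N i j = 1) ∧ ∀ i, Ntilde i j = N i j) ∨
      -- (v) all-minus-ones column: unchanged
      ((∀ i, N i j = -1) ∧ ∀ i, Ntilde i j = N i j))
    (B : Matrix (Fin b) (Fin b) ℝ) (hB : B.IsSymm)
    (hBrow : ∃ r : ℝ, ∀ i, ∑ j, B i j = r)
    (C : Matrix (Fin c) (Fin c) ℝ) (hC : C.IsSymm) :
    (Matrix.fromBlocks B N Nᵀ C).charpoly =
      (Matrix.fromBlocks B Ntilde Ntildeᵀ C).charpoly := by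
  classical
  obtain ⟨r, hr⟩ := hBrow
  obtain ⟨m, hm⟩ := hbe
  have hm0 : m ≠ 0 := by omega
  have hmR : (m : ℝ) ≠ 0 := Nat.cast_ne_zero.mpr hm0
  have hbR : (b : ℝ) ≠ 0 := Nat.cast_ne_zero.mpr hb.ne'
  have hbm : (b : ℝ) = (m : ℝ) + (m : ℝ) := by rw [hm]; push_cast; ring
  set J : Matrix (Fin b) (Fin b) ℝ := Matrix.of (fun _ _ => (1 : ℝ)) with hJ
  set Qb : Matrix (Fin b) (Fin b) ℝ := ((2 : ℝ) / b) • J - 1 with hQbdef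
  have hJJ : J * J = (b : ℝ) • J := by
    ext i k
    simp [hJ, Matrix.mul_apply, Finset.card_univ]
  -- uniform description of Ntilde
  have hNt : ∀ i j, Ntilde i j = (2 / b) * (∑ k, N k j) - N i j := by
    intro i j
    obtain ⟨hsum, hcard⟩ := col_aux (fun i => N i j) (fun i => hNent i j)
    rcases hcols j with ⟨hs, hnt⟩ | ⟨h1, h0, hnt⟩ | ⟨h1, h0, hnt⟩ | ⟨hall, hnt⟩ | ⟨hall, hnt⟩
    · rw [hnt, hs]; ring
    · have hc1 : (Finset.univ.filter (fun i => N i j = 1)).card = m := by omega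
      have hcm : (Finset.univ.filter (fun i => N i j = -1)).card = 0 := by omega
      rw [hnt, hsum, hc1, hcm]
      have : 2 / (b : ℝ) * ((m : ℝ) - (0 : ℕ)) = 1 := by
        rw [hbm]; push_cast; field_simp; ring
      rw [this]
    · have hc1 : (Finset.univ.filter (fun i => N i j = -1)).card = m := by omega
      have hcm : (Finset.univ.filter (fun i => N i j = 1)).card = 0 := by omega
      rw [hnt, hsum, hc1, hcm]
      have : 2 / (b : ℝ) * ((0 : ℕ) - (m : ℝ)) = -1 := by
        rw [hbm]; push_cast; field_simp; ring
      rw [this]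
    · have hsb : (∑ k, N k j) = (b : ℝ) := by
        rw [Finset.sum_congr rfl (fun k _ => hall k)]
        simp [Finset.card_univ]
      have h2 : 2 / (b : ℝ) * (b : ℝ) = 2 := by field_simp
      rw [hnt, hsb, hall i, h2]
      norm_num
    · have hsb : (∑ k, N k j) = -(b : ℝ) := by
        rw [Finset.sum_congr rfl (fun k _ => hall k)]
        simp [Finset.card_univ]
      have h2 : 2 / (b : ℝ) * (-(b : ℝ)) = -2 := by field_simp
      rw [hnt, hsb, hall i, h2]
      norm_num
  -- Qb is an involution
  have hfact : 2 / (b : ℝ) * (2 / b * b) = 2 / b + 2 / b := by field_simp; ring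
  have hQQ : Qb * Qb = 1 := by
    rw [hQbdef]
    simp only [sub_mul, mul_sub, mul_one, one_mul, smul_mul_assoc, mul_smul_comm, hJJ]
    match_scalars <;> (push_cast; field_simp; try ring_nf; try norm_num)
  -- Qb fixes B
  have hsymB : ∀ i k : Fin b, B i k = B k i := fun i k => by
    conv_lhs => rw [← hB]
    rfl
  have hJB : J * B = r • J := by
    ext i k
    simp only [Matrix.mul_apply, hJ, Matrix.of_apply, one_mul, Matrix.smul_apply, smul_eq_mul,
      mul_one]
    rw [Finset.sum_congr rfl (fun x _ => hsymB x k), hr]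
  have hBJ : B * J = r • J := by
    ext i k
    simp only [Matrix.mul_apply, hJ, Matrix.of_apply, mul_one, Matrix.smul_apply, smul_eq_mul]
    rw [hr]
  have hfact2 : 2 / (b : ℝ) * r * (2 / b * b) = 2 / b * r + 2 / b * r := by field_simp; ring
  have hQBQ : Qb * B * Qb = B := by
    rw [hQbdef]
    simp only [sub_mul, mul_sub, mul_one, one_mul, smul_mul_assoc, mul_smul_comm, hJJ, hJB, hBJ]
    match_scalars <;> (push_cast; field_simp; try ring_nf; try norm_num)
  -- Qb maps N to Ntilde
  have hQN : Qb * N = Ntilde := by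
    ext i j
    rw [Matrix.mul_apply]
    simp only [hQbdef, Matrix.sub_apply, Matrix.smul_apply, hJ, Matrix.of_apply, smul_eq_mul,
      mul_one, Matrix.one_apply, sub_mul, ite_mul, one_mul, zero_mul, Finset.sum_sub_distrib,
      Finset.sum_ite_eq, Finset.mem_univ, if_true]
    rw [← Finset.mul_sum, hNt i j]
    try simp
  have hQbsym : Qbᵀ = Qb := by
    rw [hQbdef, Matrix.transpose_sub, Matrix.transpose_smul, Matrix.transpose_one]
    congr 1
  have hNtT : Ntildeᵀ = Nᵀ * Qb := by
    rw [← hQN, Matrix.transpose_mul, hQbsym]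
  -- the block switching matrix
  set Q : Matrix (Fin b ⊕ Fin c) (Fin b ⊕ Fin c) ℝ :=
    Matrix.fromBlocks Qb 0 0 1 with hQdef
  have hQQ' : Q * Q = 1 := by
    rw [hQdef, Matrix.fromBlocks_multiply]
    simp [hQQ, ← Matrix.fromBlocks_one]
  have hconj : Q * (Matrix.fromBlocks B N Nᵀ C) * Q = Matrix.fromBlocks B Ntilde Ntildeᵀ C := by
    rw [hQdef, Matrix.fromBlocks_multiply, Matrix.fromBlocks_multiply]
    simp only [Matrix.zero_mul, Matrix.mul_zero, add_zero, zero_add, Matrix.one_mul,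
      Matrix.mul_one]
    rw [hQBQ, hQN, ← hNtT]
  rw [← hconj]
  exact (conj_charpoly Q _ hQQ').symm
end

section
/- (Godsil–McKay switching) Let G be a finite simple graph and let π = {C_1, …, C_t, D} be a partition of its vertex set with |C_i| = n_i such that: (1) for each 1 ≤ i, j ≤ t, any two vertices in C_i have the same number of neighbors in C_j; and (2) every vertex v ∈ D has either 0, n_i/2, or n_i neighbors in C_i, for each i. Let G^π be the graph obtained from G as follows: for every v ∈ D and every i such that v has exactly n_i/2 neighbors in C_i, delete those n_i/2 edges and join v instead to the remaining n_i/2 vertices of C_i; all other adjacencies are unchanged. Then the adjacency matrices of G and G^π have the same characteristic polynomial. -/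
/-!
Let `Q` be the symmetric matrix that is the identity on `D` and `(2 / nᵢ) J - I` on each
block `Cᵢ × Cᵢ`, and zero elsewhere. Then `Q² = 1`, so `Q A Q` is cospectral with `A`.
Conjugating by `Q` leaves the `Cᵢ × Cⱼ` blocks of `A` unchanged because they have constant
row and column sums (condition (1)), leaves `D × D` unchanged, and replaces an entry
`a` of a `D × Cⱼ` block by `2 dⱼ / nⱼ - a`, where `dⱼ` is the row sum of the block.
By condition (2) this flips `a` exactly when `dⱼ = nⱼ / 2`, so `Q A Q` is the adjacency
matrix of the switched graph.
-/

open Matrix Finset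

theorem Matrix.charpoly_mul_mul_of_mul_self_eq_one {n R : Type*} [CommRing R] [Fintype n]
    [DecidableEq n] {Q : Matrix n n R} (hQ : Q * Q = 1) (A : Matrix n n R) :
    (Q * A * Q).charpoly = A.charpoly := by
  rw [charpoly_mul_comm, ← mul_assoc, hQ, one_mul]

theorem SimpleGraph.adjMatrix_apply_of_adj_iff_xor {V α : Type*} [AddGroupWithOne α] {G G' : SimpleGraph V}
    [DecidableRel G.Adj] [DecidableRel G'.Adj] {P : Prop} [Decidable P] {u v : V}
    (h : G'.Adj u v ↔ Xor P (G.Adj u v)) :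
    G'.adjMatrix α u v = if P then 1 - G.adjMatrix α u v else G.adjMatrix α u v := by
  by_cases hP : P <;> by_cases hG : G.Adj u v <;> simp_all [Xor]

section Switching

variable {V : Type*} [DecidableEq V] {t : ℕ} (C : Fin t → Finset V) (D : Finset V)

noncomputable def switchingMatrix : Matrix V V ℝ := fun u v =>
  (if u = v then (if u ∈ D then 1 else -1) else 0) +
    ∑ i, if u ∈ C i ∧ v ∈ C i then 2 / (#(C i) : ℝ) else 0

theorem switchingMatrix_isSymm : (switchingMatrix C D).IsSymm := by
  ext u v
  simp only [transpose_apply, switchingMatrix]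
  congr 1
  · rcases eq_or_ne u v with rfl | h
    · rfl
    · simp [h, h.symm]
  · exact sum_congr rfl fun i _ => if_congr and_comm rfl rfl

variable {C D}

theorem switchingMatrix_apply_of_mem_D (hCD : ∀ i, Disjoint (C i) D) {u : V} (hu : u ∈ D)
    (x : V) : switchingMatrix C D u x = (1 : Matrix V V ℝ) u x := by
  have hnotC : ∀ i, u ∉ C i := fun i hC => disjoint_left.mp (hCD i) hC hu
  simp [switchingMatrix, one_apply, hu, hnotC]

theorem switchingMatrix_apply_of_mem_C (hCC : ∀ i j, i ≠ j → Disjoint (C i) (C j))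
    (hCD : ∀ i, Disjoint (C i) D) {i : Fin t} {u : V} (hu : u ∈ C i) (x : V) :
    switchingMatrix C D u x =
      (if x ∈ C i then 2 / (#(C i) : ℝ) else 0) - (1 : Matrix V V ℝ) u x := by
  have hsum : (∑ j, if u ∈ C j ∧ x ∈ C j then 2 / (#(C j) : ℝ) else 0) =
      if x ∈ C i then 2 / (#(C i) : ℝ) else 0 := by
    rw [sum_eq_single i (fun j _ hji => if_neg fun h =>
      disjoint_left.mp (hCC j i hji) h.1 hu) (by simp)]
    simp [hu]
  simp only [switchingMatrix, hsum, disjoint_left.mp (hCD i) hu, if_false, one_apply]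
  split_ifs <;> ring

variable [Fintype V]

theorem switchingMatrix_mul_apply_of_mem_D (hCD : ∀ i, Disjoint (C i) D) (B : Matrix V V ℝ)
    {u : V} (hu : u ∈ D) (v : V) : (switchingMatrix C D * B) u v = B u v := by
  simp [mul_apply, switchingMatrix_apply_of_mem_D hCD hu, one_apply]

theorem switchingMatrix_mul_apply_of_mem_C (hCC : ∀ i j, i ≠ j → Disjoint (C i) (C j))
    (hCD : ∀ i, Disjoint (C i) D) (B : Matrix V V ℝ) {i : Fin t} {u : V} (hu : u ∈ C i)
    (v : V) :
    (switchingMatrix C D * B) u v = 2 / (#(C i) : ℝ) * ∑ x ∈ C i, B x v - B u v := by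
  simp only [mul_apply, switchingMatrix_apply_of_mem_C hCC hCD hu, sub_mul, ite_mul, zero_mul,
    sum_sub_distrib, one_apply, ite_mul, one_mul, sum_ite_eq, mem_univ, if_true, ← sum_filter,
    filter_mem_eq_inter, univ_inter, mul_sum]

theorem mul_switchingMatrix_apply (B : Matrix V V ℝ) (u v : V) :
    (B * switchingMatrix C D) u v = (switchingMatrix C D * Bᵀ) v u := by
  conv_rhs => rw [← (switchingMatrix_isSymm C D).eq, ← transpose_mul]
  rfl

theorem mul_switchingMatrix_apply_of_mem_D (hCD : ∀ i, Disjoint (C i) D) (B : Matrix V V ℝ)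
    (u : V) {v : V} (hv : v ∈ D) : (B * switchingMatrix C D) u v = B u v := by
  rw [mul_switchingMatrix_apply, switchingMatrix_mul_apply_of_mem_D hCD _ hv, transpose_apply]

theorem mul_switchingMatrix_apply_of_mem_C (hCC : ∀ i j, i ≠ j → Disjoint (C i) (C j))
    (hCD : ∀ i, Disjoint (C i) D) (B : Matrix V V ℝ) (u : V) {j : Fin t} {v : V}
    (hv : v ∈ C j) :
    (B * switchingMatrix C D) u v = 2 / (#(C j) : ℝ) * ∑ y ∈ C j, B u y - B u v := by
  simp only [mul_switchingMatrix_apply, switchingMatrix_mul_apply_of_mem_C hCC hCD _ hv,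
    transpose_apply]

theorem switchingMatrix_mul_self (hCC : ∀ i j, i ≠ j → Disjoint (C i) (C j))
    (hCD : ∀ i, Disjoint (C i) D) (hcover : ∀ v, v ∈ D ∨ ∃ i, v ∈ C i) :
    switchingMatrix C D * switchingMatrix C D = 1 := by
  ext u v
  rcases hcover u with hu | ⟨i, hu⟩
  · rw [switchingMatrix_mul_apply_of_mem_D hCD _ hu, switchingMatrix_apply_of_mem_D hCD hu]
  have hn : (#(C i) : ℝ) ≠ 0 := Nat.cast_ne_zero.mpr (card_ne_zero_of_mem hu)
  have hcol : ∑ x ∈ C i, switchingMatrix C D x v = if v ∈ C i then 1 else 0 := by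
    rw [sum_congr rfl fun x hx => switchingMatrix_apply_of_mem_C hCC hCD hx v, sum_sub_distrib,
      sum_const, nsmul_eq_mul]
    simp only [one_apply, sum_ite_eq']
    split_ifs
    · field_simp; norm_num
    · simp
  rw [switchingMatrix_mul_apply_of_mem_C hCC hCD _ hu, hcol,
    switchingMatrix_apply_of_mem_C hCC hCD hu]
  split_ifs <;> ring

theorem switchingMatrix_conj_apply_of_mem_D_of_mem_D (hCD : ∀ i, Disjoint (C i) D)
    (B : Matrix V V ℝ) {u v : V} (hu : u ∈ D) (hv : v ∈ D) :
    (switchingMatrix C D * B * switchingMatrix C D) u v = B u v := by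
  rw [mul_switchingMatrix_apply_of_mem_D hCD _ _ hv, switchingMatrix_mul_apply_of_mem_D hCD _ hu]

theorem switchingMatrix_conj_apply_of_mem_D_of_mem_C (hCC : ∀ i j, i ≠ j → Disjoint (C i) (C j))
    (hCD : ∀ i, Disjoint (C i) D) (B : Matrix V V ℝ) {j : Fin t} {u v : V} (hu : u ∈ D)
    (hv : v ∈ C j) :
    (switchingMatrix C D * B * switchingMatrix C D) u v =
      2 / (#(C j) : ℝ) * ∑ y ∈ C j, B u y - B u v := by
  simp only [mul_switchingMatrix_apply_of_mem_C hCC hCD _ _ hv,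
    switchingMatrix_mul_apply_of_mem_D hCD _ hu]

theorem switchingMatrix_conj_apply_of_mem_C_of_mem_C
    (hCC : ∀ i j, i ≠ j → Disjoint (C i) (C j)) (hCD : ∀ i, Disjoint (C i) D)
    (B : Matrix V V ℝ) {i j : Fin t} {u v : V} (hu : u ∈ C i) (hv : v ∈ C j) {r c : ℝ}
    (hrow : ∀ x ∈ C i, ∑ y ∈ C j, B x y = r) (hcol : ∀ y ∈ C j, ∑ x ∈ C i, B x y = c) :
    (switchingMatrix C D * B * switchingMatrix C D) u v = B u v := by
  have hni : (#(C i) : ℝ) ≠ 0 := Nat.cast_ne_zero.mpr (card_ne_zero_of_mem hu)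
  have hnj : (#(C j) : ℝ) ≠ 0 := Nat.cast_ne_zero.mpr (card_ne_zero_of_mem hv)
  have hQB : ∀ y ∈ C j, (switchingMatrix C D * B) u y = 2 / (#(C i) : ℝ) * c - B u y :=
    fun y hy => by rw [switchingMatrix_mul_apply_of_mem_C hCC hCD _ hu, hcol y hy]
  have hcount : (#(C i) : ℝ) * r = #(C j) * c := by
    calc (#(C i) : ℝ) * r = ∑ x ∈ C i, ∑ y ∈ C j, B x y := by
          rw [sum_congr rfl hrow, sum_const, nsmul_eq_mul]
      _ = ∑ y ∈ C j, ∑ x ∈ C i, B x y := sum_comm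
      _ = #(C j) * c := by rw [sum_congr rfl hcol, sum_const, nsmul_eq_mul]
  rw [mul_switchingMatrix_apply_of_mem_C hCC hCD _ _ hv, sum_congr rfl hQB, hQB v hv,
    sum_sub_distrib, hrow u hu, sum_const, nsmul_eq_mul]
  field_simp
  linear_combination (-2) * hcount

end Switching

namespace SimpleGraph

variable {V : Type*} (G : SimpleGraph V) [DecidableRel G.Adj]

def degreeIn (s : Finset V) (v : V) : ℕ := #(s.filter (G.Adj v ·))

variable {G}

theorem sum_adjMatrix_eq_degreeIn {α : Type*} [AddCommMonoidWithOne α] (s : Finset V) (x : V) :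
    ∑ y ∈ s, G.adjMatrix α x y = G.degreeIn s x := by
  simp [adjMatrix_apply, sum_boole, degreeIn]

theorem adj_of_degreeIn_eq_card {s : Finset V} {u v : V} (h : G.degreeIn s u = #s) (hv : v ∈ s) :
    G.Adj u v :=
  card_filter_eq_iff.mp h v hv

theorem not_adj_of_degreeIn_eq_zero {s : Finset V} {u v : V} (h : G.degreeIn s u = 0)
    (hv : v ∈ s) : ¬G.Adj u v :=
  card_filter_eq_zero_iff.mp h v hv

variable {t : ℕ} {C : Fin t → Finset V} {D : Finset V}

variable (G C D) in
def IsSwitchedPair (u v : V) : Prop :=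
  ∃ i, (u ∈ D ∧ v ∈ C i ∧ 2 * G.degreeIn (C i) u = #(C i)) ∨
    (v ∈ D ∧ u ∈ C i ∧ 2 * G.degreeIn (C i) v = #(C i))

theorem not_isSwitchedPair_of_mem_iff_mem (hCD : ∀ i, Disjoint (C i) D) {u v : V}
    (h : u ∈ D ↔ v ∈ D) : ¬G.IsSwitchedPair C D u v := by
  rintro ⟨i, ⟨hu, hv, -⟩ | ⟨hv, hu, -⟩⟩
  · exact Finset.disjoint_left.mp (hCD i) hv (h.mp hu)
  · exact Finset.disjoint_left.mp (hCD i) hu (h.mpr hv)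

theorem isSwitchedPair_iff_of_mem_of_mem (hCC : ∀ i j, i ≠ j → Disjoint (C i) (C j))
    (hCD : ∀ i, Disjoint (C i) D) {j : Fin t} {u v : V} (hu : u ∈ D) (hv : v ∈ C j) :
    G.IsSwitchedPair C D u v ↔ 2 * G.degreeIn (C j) u = #(C j) := by
  constructor
  · rintro ⟨i, ⟨-, hvi, h⟩ | ⟨hvD, -, -⟩⟩
    · obtain rfl : i = j := by_contra fun hij => Finset.disjoint_left.mp (hCC i j hij) hvi hv
      exact h
    · exact absurd hvD (Finset.disjoint_left.mp (hCD j) hv)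
  · exact fun h => ⟨j, .inl ⟨hu, hv, h⟩⟩

end SimpleGraph

section Cospectral

open SimpleGraph

variable {V : Type*} [Fintype V] [DecidableEq V] {G G' : SimpleGraph V} [DecidableRel G.Adj]
  [DecidableRel G'.Adj] {t : ℕ} {C : Fin t → Finset V} {D : Finset V}

theorem switchingMatrix_conj_adjMatrix_apply_of_mem_D
    (hCC : ∀ i j, i ≠ j → Disjoint (C i) (C j)) (hCD : ∀ i, Disjoint (C i) D)
    (hcover : ∀ v, v ∈ D ∨ ∃ i, v ∈ C i)
    (hD : ∀ v ∈ D, ∀ i, G.degreeIn (C i) v = 0 ∨ 2 * G.degreeIn (C i) v = #(C i) ∨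
      G.degreeIn (C i) v = #(C i))
    (hG' : ∀ u v, G'.Adj u v ↔ Xor (G.IsSwitchedPair C D u v) (G.Adj u v))
    {u : V} (hu : u ∈ D) (v : V) :
    (switchingMatrix C D * G.adjMatrix ℝ * switchingMatrix C D) u v = G'.adjMatrix ℝ u v := by
  classical
  rw [adjMatrix_apply_of_adj_iff_xor (hG' u v)]
  rcases hcover v with hv | ⟨j, hv⟩
  · rw [if_neg (not_isSwitchedPair_of_mem_iff_mem hCD (iff_of_true hu hv)),
      switchingMatrix_conj_apply_of_mem_D_of_mem_D hCD _ hu hv]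
  have hn : (#(C j) : ℝ) ≠ 0 := Nat.cast_ne_zero.mpr (card_ne_zero_of_mem hv)
  have hpos : 0 < #(C j) := card_pos.mpr ⟨v, hv⟩
  rw [isSwitchedPair_iff_of_mem_of_mem hCC hCD hu hv,
    switchingMatrix_conj_apply_of_mem_D_of_mem_C hCC hCD _ hu hv, sum_adjMatrix_eq_degreeIn]
  rcases hD u hu j with h0 | hhalf | hfull
  · rw [if_neg (by omega), h0, adjMatrix_apply, if_neg (not_adj_of_degreeIn_eq_zero h0 hv)]
    simp
  · have : (2 * G.degreeIn (C j) u : ℝ) = #(C j) := by exact_mod_cast hhalf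
    rw [if_pos hhalf]
    field_simp
    linear_combination this
  · rw [if_neg (by omega), hfull, adjMatrix_apply, if_pos (adj_of_degreeIn_eq_card hfull hv)]
    field_simp
    norm_num

theorem switchingMatrix_conj_adjMatrix
    (hCC : ∀ i j, i ≠ j → Disjoint (C i) (C j)) (hCD : ∀ i, Disjoint (C i) D)
    (hcover : ∀ v, v ∈ D ∨ ∃ i, v ∈ C i)
    (hequit : ∀ i j, ∀ u ∈ C i, ∀ v ∈ C i, G.degreeIn (C j) u = G.degreeIn (C j) v)
    (hD : ∀ v ∈ D, ∀ i, G.degreeIn (C i) v = 0 ∨ 2 * G.degreeIn (C i) v = #(C i) ∨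
      G.degreeIn (C i) v = #(C i))
    (hG' : ∀ u v, G'.Adj u v ↔ Xor (G.IsSwitchedPair C D u v) (G.Adj u v)) :
    switchingMatrix C D * G.adjMatrix ℝ * switchingMatrix C D = G'.adjMatrix ℝ := by
  have hsymm : (switchingMatrix C D * G.adjMatrix ℝ * switchingMatrix C D).IsSymm := by
    simp only [IsSymm, transpose_mul, (switchingMatrix_isSymm C D).eq, transpose_adjMatrix,
      Matrix.mul_assoc]
  ext u v
  rcases hcover u with hu | ⟨i, hu⟩
  · exact switchingMatrix_conj_adjMatrix_apply_of_mem_D hCC hCD hcover hD hG' hu v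
  rcases hcover v with hv | ⟨j, hv⟩
  · rw [← hsymm.apply, ← G'.isSymm_adjMatrix.apply]
    exact switchingMatrix_conj_adjMatrix_apply_of_mem_D hCC hCD hcover hD hG' hv u
  have hnotD : ∀ {k w}, w ∈ C k → w ∉ D := fun hw => Finset.disjoint_left.mp (hCD _) hw
  have hrow : ∀ x ∈ C i, ∑ y ∈ C j, G.adjMatrix ℝ x y = G.degreeIn (C j) u := fun x hx => by
    rw [sum_adjMatrix_eq_degreeIn, hequit i j x hx u hu]
  have hcol : ∀ y ∈ C j, ∑ x ∈ C i, G.adjMatrix ℝ x y = G.degreeIn (C i) v := fun y hy => by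
    rw [sum_congr rfl fun x _ => (G.isSymm_adjMatrix (α := ℝ)).apply y x,
      sum_adjMatrix_eq_degreeIn, hequit j i y hy v hv]
  classical
  rw [switchingMatrix_conj_apply_of_mem_C_of_mem_C hCC hCD _ hu hv hrow hcol,
    adjMatrix_apply_of_adj_iff_xor (hG' u v),
    if_neg (not_isSwitchedPair_of_mem_iff_mem hCD (iff_of_false (hnotD hu) (hnotD hv)))]

end Cospectral

/-- **Godsil–McKay switching.** If `π = {C 1, …, C t, D}` is a partition of the vertex
set of a finite simple graph `G` such that (1) any two vertices of `C i` have the same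
number of neighbours in `C j`, and (2) every `v ∈ D` has `0`, `n i / 2` or `n i`
neighbours in `C i` (where `n i = |C i|`), then the graph `G'` obtained by flipping the
adjacencies between each `v ∈ D` and each part `C i` in which `v` has exactly `n i / 2`
neighbours is cospectral with `G`. -/
theorem godsil_mckay_switching {V : Type*} [Fintype V] [DecidableEq V]
    (G G' : SimpleGraph V) [DecidableRel G.Adj] [DecidableRel G'.Adj]
    (t : ℕ) (C : Fin t → Finset V) (D : Finset V)
    -- `π = {C 1, …, C t, D}` is a partition of the vertex set
    (hCC : ∀ i j, i ≠ j → Disjoint (C i) (C j))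
    (hCD : ∀ i, Disjoint (C i) D)
    (hcover : ∀ v, v ∈ D ∨ ∃ i, v ∈ C i)
    -- (1): any two vertices of `C i` have the same number of neighbours in `C j`
    (hequit : ∀ i j, ∀ u ∈ C i, ∀ v ∈ C i,
      ((C j).filter (fun w => G.Adj u w)).card =
        ((C j).filter (fun w => G.Adj v w)).card)
    -- (2): every `v ∈ D` has `0`, `n i / 2` or `n i` neighbours in `C i`
    (hD : ∀ v ∈ D, ∀ i,
      ((C i).filter (fun w => G.Adj v w)).card = 0 ∨
      2 * ((C i).filter (fun w => G.Adj v w)).card = (C i).card ∨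
      ((C i).filter (fun w => G.Adj v w)).card = (C i).card)
    -- `G'` is obtained from `G` by local switching: the adjacency between `u` and `v`
    -- is flipped exactly when one of them lies in `D`, the other lies in a part `C i`,
    -- and the vertex in `D` has exactly `n i / 2` neighbours in `C i`
    (hG' : ∀ u v, G'.Adj u v ↔
      Xor'
        (∃ i,
          (u ∈ D ∧ v ∈ C i ∧
            2 * ((C i).filter (fun w => G.Adj u w)).card = (C i).card) ∨
          (v ∈ D ∧ u ∈ C i ∧
            2 * ((C i).filter (fun w => G.Adj v w)).card = (C i).card))
        (G.Adj u v)) :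
    (G.adjMatrix ℝ).charpoly = (G'.adjMatrix ℝ).charpoly := by
  rw [← switchingMatrix_conj_adjMatrix hCC hCD hcover hequit hD hG',
    charpoly_mul_mul_of_mul_self_eq_one (switchingMatrix_mul_self hCC hCD hcover)]
end

section
/- (GM-switching for signed graphs) Let A be a symmetric n×n real matrix with entries in {−1, 0, 1} and zero diagonal (the adjacency matrix of a signed graph Γ), and let π = {C_1, …, C_t, D} be a partition of the index set {1, …, n} with |C_i| = n_i. For a vertex v and a part C_i, let d_i^+(v) and d_i^−(v) be the number of indices w ∈ C_i with A_{vw} = 1 and A_{vw} = −1, respectively, and let d_i^±(v) = d_i^+(v) − d_i^−(v). Suppose: (1) for each 1 ≤ i, j ≤ t, any two vertices of C_i have the same j-th net-degree d_j^±; and (2) for each i and each v ∈ D, either d_i^±(v) = 0, or d_i^+(v) = n_i/2 and d_i^−(v) = 0, or d_i^−(v) = n_i/2 and d_i^+(v) = 0, or d_i^+(v) = n_i, or d_i^−(v) = n_i. Let A^π be the symmetric matrix obtained from A by, for every v ∈ D and every i: if d_i^±(v) = 0, negating all entries A_{vw} with w ∈ C_i; if d_i^+(v) = n_i/2 and d_i^−(v)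 = 0, replacing the column segment (A_{wv})_{w∈C_i} by its 0/1-complement; if d_i^−(v) = n_i/2 and d_i^+(v) = 0, replacing the column segment (A_{wv})_{w∈C_i} by its 0/(−1)-complement (i.e., by −1_{n_i} minus that segment); and leaving everything else unchanged. Then A and A^π have the same characteristic polynomial. -/
open scoped Classical
open Matrix

/-!
The switched matrix is `Q * A * Q`, where `Q` acts as `(2 / nᵢ) J - I` on each block `Cᵢ` and as
the identity on `D`; since `J² = nᵢ J`, `Q` is an involution, so `A` and `A'` are similar.
On a block `Cᵢ × Cⱼ` conjugation by `Q` changes nothing, because `A` has constant row sums `r`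
and column sums `c` there and `nᵢ r = nⱼ c` by double counting. On `D × Cⱼ` it replaces each row
segment `a` by `(2 / nⱼ) (∑ a) 1 - a`, which is exactly what the switching rules prescribe:
negation when `∑ a = 0`, the complement when `∑ a = ± nⱼ / 2`, no change when `a = ± 1`.
-/

namespace Matrix

theorem charpoly_conj_of_mul_self_eq_one {ι R : Type*} [Fintype ι] [DecidableEq ι] [CommRing R]
    {Q : Matrix ι ι R} (hQ : Q * Q = 1) (M : Matrix ι ι R) :
    (Q * M * Q).charpoly = M.charpoly := by
  rw [mul_assoc, charpoly_mul_comm, mul_assoc, hQ, mul_one]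

theorem IsSymm.mul_mul_of_isSymm {ι R : Type*} [Fintype ι] [CommSemiring R] {Q M : Matrix ι ι R}
    (hQ : Q.IsSymm) (hM : M.IsSymm) : (Q * M * Q).IsSymm := by
  rw [IsSymm, transpose_mul, transpose_mul, hQ.eq, hM.eq, mul_assoc]

end Matrix

open Finset Function

section GMSwitching

variable {ι κ K : Type*} [DecidableEq ι] [Field K] {C : κ → Finset ι}

variable (K) in
/-- `h.choose` is the part containing `u`, unique once the parts are pairwise disjoint. -/
noncomputable def gmSwitchingMatrix (C : κ → Finset ι) : Matrix ι ι K :=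
  Matrix.of fun u v =>
    if h : ∃ i, u ∈ C i then
      (if v ∈ C h.choose then 2 / (#(C h.choose) : K) else 0) - if u = v then 1 else 0
    else if u = v then 1 else 0

theorem gmSwitchingMatrix_apply_of_mem (hC : Pairwise (Disjoint on C)) {i : κ} {u : ι}
    (hu : u ∈ C i) (v : ι) :
    gmSwitchingMatrix K C u v =
      (if v ∈ C i then 2 / (#(C i) : K) else 0) - if u = v then 1 else 0 := by
  have h : ∃ j, u ∈ C j := ⟨i, hu⟩
  obtain rfl : h.choose = i := hC.eq (not_disjoint_iff.2 ⟨u, h.choose_spec, hu⟩)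
  simp only [gmSwitchingMatrix, of_apply, dif_pos h]

theorem gmSwitchingMatrix_apply_of_notMem {u : ι} (hu : ∀ i, u ∉ C i) (v : ι) :
    gmSwitchingMatrix K C u v = if u = v then 1 else 0 := by
  simp only [gmSwitchingMatrix, of_apply, dif_neg (not_exists.2 hu)]

theorem gmSwitchingMatrix_isSymm (hC : Pairwise (Disjoint on C)) :
    (gmSwitchingMatrix K C).IsSymm := by
  have hsymm_of_mem :
      ∀ {i u} v, u ∈ C i → gmSwitchingMatrix K C u v = gmSwitchingMatrix K C v u := by
    intro i u v hu
    rw [gmSwitchingMatrix_apply_of_mem hC hu]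
    by_cases hv : v ∈ C i
    · simp [gmSwitchingMatrix_apply_of_mem hC hv, hu, hv, eq_comm]
    · have huv : u ≠ v := by rintro rfl; exact hv hu
      by_cases hv' : ∃ j, v ∈ C j
      · obtain ⟨j, hj⟩ := hv'
        have hu' : u ∉ C j := fun hu' => hv (hC.eq (not_disjoint_iff.2 ⟨u, hu, hu'⟩) ▸ hj)
        simp [gmSwitchingMatrix_apply_of_mem hC hj, hv, hu', huv, huv.symm]
      · simp [gmSwitchingMatrix_apply_of_notMem (not_exists.1 hv'), hv, huv, huv.symm]
  ext u v
  rw [transpose_apply]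
  by_cases hu : ∃ i, u ∈ C i
  · exact (hsymm_of_mem v hu.choose_spec).symm
  by_cases hv : ∃ j, v ∈ C j
  · exact hsymm_of_mem u hv.choose_spec
  simp [gmSwitchingMatrix_apply_of_notMem (not_exists.1 hu),
    gmSwitchingMatrix_apply_of_notMem (not_exists.1 hv), eq_comm]

variable [Fintype ι]

theorem gmSwitchingMatrix_mul_apply_of_mem (hC : Pairwise (Disjoint on C)) (M : Matrix ι ι K)
    {i : κ} {u : ι} (hu : u ∈ C i) (v : ι) :
    (gmSwitchingMatrix K C * M) u v = 2 / (#(C i) : K) * ∑ w ∈ C i, M w v - M u v := by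
  simp only [mul_apply, gmSwitchingMatrix_apply_of_mem hC hu, sub_mul, ite_mul, zero_mul,
    one_mul, sum_sub_distrib, sum_ite_eq, mem_univ, if_true, ← sum_filter, filter_mem_eq_inter,
    univ_inter, mul_sum]

theorem gmSwitchingMatrix_mul_apply_of_notMem (M : Matrix ι ι K) {u : ι} (hu : ∀ i, u ∉ C i)
    (v : ι) : (gmSwitchingMatrix K C * M) u v = M u v := by
  simp [mul_apply, gmSwitchingMatrix_apply_of_notMem hu]

theorem mul_gmSwitchingMatrix_apply_of_mem (hC : Pairwise (Disjoint on C)) (M : Matrix ι ι K)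
    {j : κ} {v : ι} (hv : v ∈ C j) (u : ι) :
    (M * gmSwitchingMatrix K C) u v = 2 / (#(C j) : K) * ∑ x ∈ C j, M u x - M u v := by
  rw [← transpose_apply (M * _), transpose_mul, (gmSwitchingMatrix_isSymm hC).eq,
    gmSwitchingMatrix_mul_apply_of_mem hC _ hv]
  simp only [transpose_apply]

theorem mul_gmSwitchingMatrix_apply_of_notMem (hC : Pairwise (Disjoint on C)) (M : Matrix ι ι K)
    {v : ι} (hv : ∀ i, v ∉ C i) (u : ι) : (M * gmSwitchingMatrix K C) u v = M u v := by
  rw [← transpose_apply (M * _), transpose_mul, (gmSwitchingMatrix_isSymm hC).eq,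
    gmSwitchingMatrix_mul_apply_of_notMem _ hv, transpose_apply]

theorem gmSwitchingMatrix_mul_self [CharZero K] (hC : Pairwise (Disjoint on C)) :
    gmSwitchingMatrix K C * gmSwitchingMatrix K C = 1 := by
  ext u v
  by_cases hu : ∃ i, u ∈ C i
  · obtain ⟨i, hu⟩ := hu
    have hcard : (#(C i) : K) ≠ 0 := Nat.cast_ne_zero.2 (card_ne_zero_of_mem hu)
    have hsum : ∑ w ∈ C i, gmSwitchingMatrix K C w v = if v ∈ C i then 1 else 0 := by
      rw [sum_congr rfl fun w hw => gmSwitchingMatrix_apply_of_mem hC hw v, sum_sub_distrib,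
        sum_const, sum_ite_eq']
      split_ifs
      · rw [nsmul_eq_mul, mul_div_cancel₀ _ hcard]; norm_num
      · simp
    rw [gmSwitchingMatrix_mul_apply_of_mem hC _ hu, hsum, gmSwitchingMatrix_apply_of_mem hC hu,
      one_apply]
    split_ifs <;> simp
  · rw [gmSwitchingMatrix_mul_apply_of_notMem _ (not_exists.1 hu),
      gmSwitchingMatrix_apply_of_notMem (not_exists.1 hu), one_apply]

theorem gmSwitchingMatrix_conj_apply_of_notMem_of_notMem (hC : Pairwise (Disjoint on C))
    (M : Matrix ι ι K) {u v : ι} (hu : ∀ i, u ∉ C i) (hv : ∀ i, v ∉ C i) :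
    (gmSwitchingMatrix K C * M * gmSwitchingMatrix K C) u v = M u v := by
  rw [mul_assoc, gmSwitchingMatrix_mul_apply_of_notMem _ hu,
    mul_gmSwitchingMatrix_apply_of_notMem hC _ hv]

theorem gmSwitchingMatrix_conj_apply_of_notMem_of_mem (hC : Pairwise (Disjoint on C))
    (M : Matrix ι ι K) {j : κ} {u v : ι} (hu : ∀ i, u ∉ C i) (hv : v ∈ C j) :
    (gmSwitchingMatrix K C * M * gmSwitchingMatrix K C) u v =
      2 / (#(C j) : K) * ∑ x ∈ C j, M u x - M u v := by
  rw [mul_assoc, gmSwitchingMatrix_mul_apply_of_notMem _ hu,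
    mul_gmSwitchingMatrix_apply_of_mem hC _ hv]

theorem gmSwitchingMatrix_conj_apply_of_mem_of_mem [CharZero K] (hC : Pairwise (Disjoint on C))
    (M : Matrix ι ι K) {i j : κ} {r c : K} (hrow : ∀ w ∈ C i, ∑ x ∈ C j, M w x = r)
    (hcol : ∀ x ∈ C j, ∑ w ∈ C i, M w x = c) {u v : ι} (hu : u ∈ C i) (hv : v ∈ C j) :
    (gmSwitchingMatrix K C * M * gmSwitchingMatrix K C) u v = M u v := by
  have hci : (#(C i) : K) ≠ 0 := Nat.cast_ne_zero.2 (card_ne_zero_of_mem hu)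
  have hcj : (#(C j) : K) ≠ 0 := Nat.cast_ne_zero.2 (card_ne_zero_of_mem hv)
  have hcount : (#(C i) : K) * r = #(C j) * c := calc
    (#(C i) : K) * r = ∑ w ∈ C i, ∑ x ∈ C j, M w x := by
      rw [sum_congr rfl hrow, sum_const, nsmul_eq_mul]
    _ = ∑ x ∈ C j, ∑ w ∈ C i, M w x := sum_comm
    _ = #(C j) * c := by rw [sum_congr rfl hcol, sum_const, nsmul_eq_mul]
  have hQM : ∀ x ∈ C j, (gmSwitchingMatrix K C * M) u x = 2 / #(C i) * c - M u x :=
    fun x hx => by rw [gmSwitchingMatrix_mul_apply_of_mem hC _ hu, hcol x hx]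
  rw [mul_gmSwitchingMatrix_apply_of_mem hC _ hv, sum_congr rfl hQM, hQM v hv, sum_sub_distrib,
    sum_const, hrow u hu, nsmul_eq_mul]
  field_simp
  linear_combination -2 * hcount

end GMSwitching

section SignedSwitching

variable {ι : Type*}

theorem sum_eq_card_filter_eq_one_sub_card_filter_eq_neg_one {R : Type*} [Ring R] [CharZero R]
    [DecidableEq R]
    (s : Finset ι) (f : ι → R) (hf : ∀ x ∈ s, f x = -1 ∨ f x = 0 ∨ f x = 1) :
    ∑ x ∈ s, f x = #(s.filter (f · = 1)) - #(s.filter (f · = -1)) := by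
  have hne : (-1 : R) ≠ 1 := fun h =>
    two_ne_zero (one_add_one_eq_two (R := R) ▸ neg_eq_iff_add_eq_zero.1 h)
  have hsplit : ∀ x ∈ s, f x = (if f x = 1 then 1 else 0) - if f x = -1 then 1 else 0 := by
    intro x hx
    rcases hf x hx with h | h | h <;> simp [h, hne, hne.symm]
  rw [sum_congr rfl hsplit, sum_sub_distrib, sum_boole, sum_boole]

theorem eq_two_div_card_mul_sum_sub_of_switching {K : Type*} [Field K] [CharZero K]
    [DecidableEq K] {s : Finset ι} {f : ι → K} {a : K} {w : ι} (hw : w ∈ s)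
    (hf : ∀ x ∈ s, f x = -1 ∨ f x = 0 ∨ f x = 1)
    (hcase : (#(s.filter (f · = 1)) : ℤ) = #(s.filter (f · = -1)) ∨
      (2 * #(s.filter (f · = 1)) = #s ∧ #(s.filter (f · = -1)) = 0) ∨
      (2 * #(s.filter (f · = -1)) = #s ∧ #(s.filter (f · = 1)) = 0) ∨
      #(s.filter (f · = 1)) = #s ∨ #(s.filter (f · = -1)) = #s)
    (hrule : ((#(s.filter (f · = 1)) : ℤ) = #(s.filter (f · = -1)) → a = -f w) ∧
      (2 * #(s.filter (f · = 1)) = #s ∧ #(s.filter (f · = -1)) = 0 → a = 1 - f w) ∧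
      (2 * #(s.filter (f · = -1)) = #s ∧ #(s.filter (f · = 1)) = 0 → a = -1 - f w) ∧
      (#(s.filter (f · = 1)) = #s → a = f w) ∧ (#(s.filter (f · = -1)) = #s → a = f w)) :
    a = 2 / #s * ∑ x ∈ s, f x - f w := by
  have hcard : (#s : K) ≠ 0 := Nat.cast_ne_zero.2 (card_ne_zero_of_mem hw)
  obtain ⟨hbalanced, hhalf_pos, hhalf_neg, hall_pos, hall_neg⟩ := hrule
  have hsum := sum_eq_card_filter_eq_one_sub_card_filter_eq_neg_one s f hf
  rcases hcase with h | ⟨h₁, h₂⟩ | ⟨h₁, h₂⟩ | h | h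
  · rw [hbalanced h, hsum, Nat.cast_injective (R := ℤ) h, sub_self]
    ring
  · have h₁' : (2 : K) * #(s.filter (f · = 1)) = #s := by exact_mod_cast h₁
    rw [hhalf_pos ⟨h₁, h₂⟩, hsum, h₂, Nat.cast_zero, sub_zero]
    field_simp
    linear_combination -h₁'
  · have h₁' : (2 : K) * #(s.filter (f · = -1)) = #s := by exact_mod_cast h₁
    rw [hhalf_neg ⟨h₁, h₂⟩, hsum, h₂, Nat.cast_zero, zero_sub]
    field_simp
    linear_combination h₁'
  · have hone : ∀ x ∈ s, f x = 1 := filter_card_eq h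
    rw [hall_pos h, sum_congr rfl hone, hone w hw, sum_const, nsmul_one]
    field_simp
    ring
  · have hneg_one : ∀ x ∈ s, f x = -1 := filter_card_eq h
    rw [hall_neg h, sum_congr rfl hneg_one, hneg_one w hw, sum_const, nsmul_eq_mul]
    field_simp
    ring

end SignedSwitching

theorem godsil_mckay_switching_signed_general (n t : ℕ)
    (A A' : Matrix (Fin n) (Fin n) ℝ)
    (hsym : A.IsSymm)
    (hent : ∀ u v, A u v = -1 ∨ A u v = 0 ∨ A u v = 1)
    (C : Fin t → Finset (Fin n)) (D : Finset (Fin n))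
    -- `π = {C 1, …, C t, D}` is a partition of the index set
    (hCC : ∀ i j, i ≠ j → Disjoint (C i) (C j))
    (hCD : ∀ i, Disjoint (C i) D)
    (hcover : ∀ v, v ∈ D ∨ ∃ i, v ∈ C i)
    -- (1): any two vertices of `C i` have the same `j`-th net-degree
    (hequit : ∀ i j, ∀ u ∈ C i, ∀ v ∈ C i,
      (((C j).filter (fun w => A u w = 1)).card : ℤ) -
          ((C j).filter (fun w => A u w = -1)).card =
        (((C j).filter (fun w => A v w = 1)).card : ℤ) -
          ((C j).filter (fun w => A v w = -1)).card)
    -- (2): conditions on the vertices of `D`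
    (hD : ∀ v ∈ D, ∀ i,
      (((C i).filter (fun w => A v w = 1)).card : ℤ) =
          ((C i).filter (fun w => A v w = -1)).card ∨
      (2 * ((C i).filter (fun w => A v w = 1)).card = (C i).card ∧
        ((C i).filter (fun w => A v w = -1)).card = 0) ∨
      (2 * ((C i).filter (fun w => A v w = -1)).card = (C i).card ∧
        ((C i).filter (fun w => A v w = 1)).card = 0) ∨
      ((C i).filter (fun w => A v w = 1)).card = (C i).card ∨
      ((C i).filter (fun w => A v w = -1)).card = (C i).card)
    -- `A'` is symmetric
    (hsym' : A'.IsSymm)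
    -- the switching rules between a vertex `v ∈ D` and the vertices `w ∈ C i`
    (hswitch : ∀ i, ∀ v ∈ D, ∀ w ∈ C i,
      ((((C i).filter (fun u => A v u = 1)).card : ℤ) =
          ((C i).filter (fun u => A v u = -1)).card →
        A' v w = -A v w) ∧
      (2 * ((C i).filter (fun u => A v u = 1)).card = (C i).card ∧
          ((C i).filter (fun u => A v u = -1)).card = 0 →
        A' v w = 1 - A v w) ∧
      (2 * ((C i).filter (fun u => A v u = -1)).card = (C i).card ∧
          ((C i).filter (fun u => A v u = 1)).card = 0 →
        A' v w = -1 - A v w) ∧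
      (((C i).filter (fun u => A v u = 1)).card = (C i).card → A' v w = A v w) ∧
      (((C i).filter (fun u => A v u = -1)).card = (C i).card → A' v w = A v w))
    -- all other entries are unchanged
    (hrest : ∀ u v, ¬ (∃ i, (u ∈ D ∧ v ∈ C i) ∨ (v ∈ D ∧ u ∈ C i)) →
      A' u v = A u v) :
    A.charpoly = A'.charpoly := by
  have hC : Pairwise (Disjoint on C) := fun i j hij => hCC i j hij
  have hout : ∀ u ∈ D, ∀ i, u ∉ C i := fun u hu i hi => disjoint_left.mp (hCD i) hi hu
  have hrow_sum :
      ∀ i j, ∀ u ∈ C i, ∀ w ∈ C i, ∑ x ∈ C j, A w x = ∑ x ∈ C j, A u x := by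
    intro i j u hu w hw
    rw [sum_eq_card_filter_eq_one_sub_card_filter_eq_neg_one _ _ fun x _ => hent w x,
      sum_eq_card_filter_eq_one_sub_card_filter_eq_neg_one _ _ fun x _ => hent u x]
    exact_mod_cast hequit i j w hw u hu
  set Q := gmSwitchingMatrix ℝ C
  have hrow_D : ∀ u ∈ D, ∀ v, (Q * A * Q) u v = A' u v := by
    intro u hu v
    rcases hcover v with hv | ⟨j, hv⟩
    · rw [gmSwitchingMatrix_conj_apply_of_notMem_of_notMem hC A (hout u hu) (hout v hv), hrest]
      rintro ⟨i, ⟨-, hvi⟩ | ⟨-, hui⟩⟩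
      exacts [hout v hv i hvi, hout u hu i hui]
    · rw [gmSwitchingMatrix_conj_apply_of_notMem_of_mem hC A (hout u hu) hv]
      exact (eq_two_div_card_mul_sum_sub_of_switching hv (fun x _ => hent u x) (hD u hu j)
        (hswitch j u hu v hv)).symm
  have hrow_C : ∀ i j, ∀ u ∈ C i, ∀ v ∈ C j, (Q * A * Q) u v = A' u v := by
    intro i j u hu v hv
    have hcol_sum : ∀ x ∈ C j, ∑ w ∈ C i, A w x = ∑ w ∈ C i, A v w := fun x hx =>
      (sum_congr rfl fun w _ => hsym.apply x w).trans (hrow_sum j i v hv x hx)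
    rw [gmSwitchingMatrix_conj_apply_of_mem_of_mem hC A (hrow_sum i j u hu) hcol_sum hu hv, hrest]
    rintro ⟨k, ⟨huD, -⟩ | ⟨hvD, -⟩⟩
    exacts [hout u huD i hu, hout v hvD j hv]
  have hconj : Q * A * Q = A' := by
    ext u v
    rcases hcover u with hu | ⟨i, hu⟩
    · exact hrow_D u hu v
    rcases hcover v with hv | ⟨j, hv⟩
    · rw [← ((gmSwitchingMatrix_isSymm hC).mul_mul_of_isSymm hsym).apply, ← hsym'.apply]
      exact hrow_D v hv u
    · exact hrow_C i j u hu v hv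
  rw [← hconj, charpoly_conj_of_mul_self_eq_one (gmSwitchingMatrix_mul_self hC)]

/-- **GM-switching for signed graphs.** Let `A` be the adjacency matrix of a signed
graph (symmetric `(−1,0,1)`-matrix with zero diagonal) and `π = {C 1, …, C t, D}` a
partition of the indices satisfying the signed GM conditions. Then the switched matrix
`A'` is cospectral with `A`. Here `d_i^+(v)`, `d_i^-(v)` are expressed with
`Finset.filter`, and "`d_i^+(v) = n_i / 2`" is expressed as `2 * d_i^+(v) = n_i`. -/
theorem godsil_mckay_switching_signed (n t : ℕ)
    (A A' : Matrix (Fin n) (Fin n) ℝ)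
    (hsym : A.IsSymm)
    (hent : ∀ u v, A u v = -1 ∨ A u v = 0 ∨ A u v = 1)
    (hdiag : ∀ v, A v v = 0)
    (C : Fin t → Finset (Fin n)) (D : Finset (Fin n))
    -- `π = {C 1, …, C t, D}` is a partition of the index set
    (hCC : ∀ i j, i ≠ j → Disjoint (C i) (C j))
    (hCD : ∀ i, Disjoint (C i) D)
    (hcover : ∀ v, v ∈ D ∨ ∃ i, v ∈ C i)
    -- (1): any two vertices of `C i` have the same `j`-th net-degree
    (hequit : ∀ i j, ∀ u ∈ C i, ∀ v ∈ C i,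
      (((C j).filter (fun w => A u w = 1)).card : ℤ) -
          ((C j).filter (fun w => A u w = -1)).card =
        (((C j).filter (fun w => A v w = 1)).card : ℤ) -
          ((C j).filter (fun w => A v w = -1)).card)
    -- (2): conditions on the vertices of `D`
    (hD : ∀ v ∈ D, ∀ i,
      (((C i).filter (fun w => A v w = 1)).card : ℤ) =
          ((C i).filter (fun w => A v w = -1)).card ∨
      (2 * ((C i).filter (fun w => A v w = 1)).card = (C i).card ∧
        ((C i).filter (fun w => A v w = -1)).card = 0) ∨
      (2 * ((C i).filter (fun w => A v w = -1)).card = (C i).card ∧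
        ((C i).filter (fun w => A v w = 1)).card = 0) ∨
      ((C i).filter (fun w => A v w = 1)).card = (C i).card ∨
      ((C i).filter (fun w => A v w = -1)).card = (C i).card)
    -- `A'` is symmetric
    (hsym' : A'.IsSymm)
    -- the switching rules between a vertex `v ∈ D` and the vertices `w ∈ C i`
    (hswitch : ∀ i, ∀ v ∈ D, ∀ w ∈ C i,
      ((((C i).filter (fun u => A v u = 1)).card : ℤ) =
          ((C i).filter (fun u => A v u = -1)).card →
        A' v w = -A v w) ∧
      (2 * ((C i).filter (fun u => A v u = 1)).card = (C i).card ∧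
          ((C i).filter (fun u => A v u = -1)).card = 0 →
        A' v w = 1 - A v w) ∧
      (2 * ((C i).filter (fun u => A v u = -1)).card = (C i).card ∧
          ((C i).filter (fun u => A v u = 1)).card = 0 →
        A' v w = -1 - A v w) ∧
      (((C i).filter (fun u => A v u = 1)).card = (C i).card → A' v w = A v w) ∧
      (((C i).filter (fun u => A v u = -1)).card = (C i).card → A' v w = A v w))
    -- all other entries are unchanged
    (hrest : ∀ u v, ¬ (∃ i, (u ∈ D ∧ v ∈ C i) ∨ (v ∈ D ∧ u ∈ C i)) →
      A' u v = A u v) :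
    A.charpoly = A'.charpoly :=
  godsil_mckay_switching_signed_general n t A A' hsym hent C D hCC hCD hcover hequit hD hsym'
    hswitch hrest
end

section
/- (Generalized GM-switching, Wang–Qiu–Hu) Let G be a finite simple graph whose vertex set is partitioned as V_1 ⊔ V_2 ⊔ V with |V_1| = |V_2| = m for a positive integer m. For a vertex v, let d_i(v) be the number of neighbors of v in V_i. Suppose there is an integer ℓ such that d_1(v) − d_2(v) = ℓ for all v ∈ V_1 and d_2(u) − d_1(u) = ℓ for all u ∈ V_2, and suppose every vertex v ∈ V satisfies one of: (i) v is adjacent to all vertices of V_1 and to none of V_2; (ii) v is adjacent to all vertices of V_2 and to none of V_1; (iii) d_1(v) = d_2(v). Let G′ be obtained from G by interchanging, for each v ∈ V of type (i) or (ii), its full adjacency to one part with full adjacency to the other part (so a vertex adjacent to all of V_1 and none of V_2 becomes adjacent to all of V_2 and none of V_1, and vice versa), leaving all other adjacencies unchanged. Then the adjacency matrices of G and G′ have the same characteristic polynomial. -/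
/-!
With `χ = 1_{V1} - 1_{V2}` we have `χ ⬝ᵥ χ = 2m`, so the Householder matrix `Q = 1 - χ χᵀ / m`
satisfies `Q² = 1` and `Q A Q` is cospectral with `A`. The degree conditions say `A χ = ℓ χ + z`,
where `z` vanishes on `V1 ∪ V2` and `z u = d₁(u) - d₂(u)` is `m`, `-m` or `0` for `u ∈ W` of
type (i), (ii) or (iii). Hence `Q A Q = A - (χ zᵀ + z χᵀ) / m`, which differs from `A` only between
a vertex `u ∈ W` of type (i) or (ii) and `V1 ∪ V2`, where `A u v` becomes `A u v ∓ χ v`: exactly the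
switched adjacency.
-/

open Matrix Finset

namespace Matrix

variable {n K : Type*} [Fintype n] [DecidableEq n]

theorem charpoly_mul_mul_of_mul_self_eq_one_s10 {R : Type*} [CommRing R] {Q : Matrix n n R}
    (hQ : Q * Q = 1) (A : Matrix n n R) : (Q * A * Q).charpoly = A.charpoly := by
  rw [charpoly_mul_comm, ← mul_assoc, hQ, one_mul]

variable [Field K] {χ : n → K} {c : K}

theorem householder_mul_self (hc : c ≠ 0) (hχ : χ ⬝ᵥ χ = 2 * c) :
    (1 - c⁻¹ • vecMulVec χ χ) * (1 - c⁻¹ • vecMulVec χ χ) = 1 := by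
  rw [sub_mul, mul_sub, mul_sub, one_mul, mul_one, one_mul, smul_mul_smul_comm,
    vecMulVec_mul_vecMulVec, hχ, vecMulVec_smul, smul_smul]
  ext i j
  simp only [sub_apply, smul_apply, smul_eq_mul]
  field_simp
  ring

theorem householder_mul_mul_householder {A : Matrix n n K} (hA : A.IsSymm) {z : n → K} {ℓ : K}
    (hc : c ≠ 0) (hχ : χ ⬝ᵥ χ = 2 * c) (hz : χ ⬝ᵥ z = 0) (hAχ : A *ᵥ χ = ℓ • χ + z) :
    (1 - c⁻¹ • vecMulVec χ χ) * A * (1 - c⁻¹ • vecMulVec χ χ) =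
      A - c⁻¹ • (vecMulVec χ z + vecMulVec z χ) := by
  have hχA : χ ᵥ* A = ℓ • χ + z := by rw [← mulVec_transpose, hA.eq, hAχ]
  simp only [sub_mul, mul_sub, one_mul, mul_one, smul_mul, Matrix.mul_smul, vecMulVec_mul,
    mul_vecMulVec, hχA, hAχ, add_dotProduct, smul_dotProduct,
    dotProduct_comm z χ, hχ, hz, smul_mulVec, vecMulVec_mulVec, op_smul_eq_smul]
  ext i j
  simp only [sub_apply, add_apply, smul_apply, vecMulVec_apply, Pi.add_apply, Pi.smul_apply,
    smul_eq_mul]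
  field_simp
  ring

theorem charpoly_sub_smul_vecMulVec_add_vecMulVec {A : Matrix n n K} (hA : A.IsSymm)
    {z : n → K} {ℓ : K} (hc : c ≠ 0) (hχ : χ ⬝ᵥ χ = 2 * c) (hz : χ ⬝ᵥ z = 0)
    (hAχ : A *ᵥ χ = ℓ • χ + z) :
    (A - c⁻¹ • (vecMulVec χ z + vecMulVec z χ)).charpoly = A.charpoly := by
  rw [← householder_mul_mul_householder hA hc hχ hz hAχ,
    charpoly_mul_mul_of_mul_self_eq_one_s10 (householder_mul_self hc hχ)]

end Matrix

section

variable {V : Type*} [DecidableEq V]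

def signedIndicator (s t : Finset V) (v : V) : ℝ :=
  (if v ∈ s then 1 else 0) - (if v ∈ t then 1 else 0)

section signedIndicator

variable {s t : Finset V} {v : V}

theorem signedIndicator_of_mem_left (h : Disjoint s t) (hv : v ∈ s) :
    signedIndicator s t v = 1 := by
  simp [signedIndicator, hv, disjoint_left.mp h hv]

theorem signedIndicator_of_mem_right (h : Disjoint s t) (hv : v ∈ t) :
    signedIndicator s t v = -1 := by
  simp [signedIndicator, hv, disjoint_right.mp h hv]

theorem signedIndicator_of_notMem (hs : v ∉ s) (ht : v ∉ t) : signedIndicator s t v = 0 := by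
  simp [signedIndicator, hs, ht]

theorem signedIndicator_dotProduct_self [Fintype V] (h : Disjoint s t) :
    signedIndicator s t ⬝ᵥ signedIndicator s t = #s + #t := by
  have hsq : ∀ v, signedIndicator s t v * signedIndicator s t v =
      (if v ∈ s then 1 else 0) + (if v ∈ t then 1 else 0) := by
    intro v
    by_cases hs : v ∈ s
    · simp [signedIndicator, hs, disjoint_left.mp h hs]
    · by_cases ht : v ∈ t <;> simp [signedIndicator, hs, ht]
  simp only [dotProduct, hsq, sum_add_distrib, sum_boole, filter_mem_eq_inter, univ_inter]

end signedIndicator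

namespace SimpleGraph

variable (G : SimpleGraph V) [DecidableRel G.Adj]

def IsCompleteAnticomplete (u : V) (s t : Finset V) : Prop :=
  (∀ w ∈ s, G.Adj u w) ∧ ∀ w ∈ t, ¬ G.Adj u w

variable [Fintype V] {G} {s t : Finset V} {u : V}

theorem adjMatrix_mulVec_signedIndicator (s t : Finset V) (u : V) :
    (G.adjMatrix ℝ *ᵥ signedIndicator s t) u = #{w ∈ s | G.Adj u w} - #{w ∈ t | G.Adj u w} := by
  simp only [mulVec, dotProduct, adjMatrix_apply, signedIndicator, mul_sub, mul_ite, mul_one,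
    mul_zero, sum_sub_distrib, sum_ite_mem, univ_inter, sum_boole]

theorem adjMatrix_mulVec_signedIndicator_of_isCompleteAnticomplete
    (h : G.IsCompleteAnticomplete u s t) :
    (G.adjMatrix ℝ *ᵥ signedIndicator s t) u = #s := by
  rw [adjMatrix_mulVec_signedIndicator, filter_true_of_mem h.1, filter_false_of_mem h.2]
  simp

theorem adjMatrix_mulVec_signedIndicator_of_isCompleteAnticomplete_swap
    (h : G.IsCompleteAnticomplete u t s) :
    (G.adjMatrix ℝ *ᵥ signedIndicator s t) u = -#t := by
  rw [adjMatrix_mulVec_signedIndicator, filter_true_of_mem h.1, filter_false_of_mem h.2]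
  simp

theorem adjMatrix_mulVec_signedIndicator_eq_mul {ℓ : ℤ} (hst : Disjoint s t)
    (hs : ∀ v ∈ s, (#{w ∈ s | G.Adj v w} : ℤ) - #{w ∈ t | G.Adj v w} = ℓ)
    (ht : ∀ v ∈ t, (#{w ∈ t | G.Adj v w} : ℤ) - #{w ∈ s | G.Adj v w} = ℓ)
    {v : V} (hv : v ∈ s ∨ v ∈ t) :
    (G.adjMatrix ℝ *ᵥ signedIndicator s t) v = ℓ * signedIndicator s t v := by
  rw [adjMatrix_mulVec_signedIndicator]
  rcases hv with hv | hv
  · rw [signedIndicator_of_mem_left hst hv, mul_one]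
    exact_mod_cast hs v hv
  · rw [signedIndicator_of_mem_right hst hv, mul_neg_one, ← ht v hv]
    push_cast
    ring

theorem adjMatrix_apply_of_adj_iff_xor_s10 {G' : SimpleGraph V} [DecidableRel G'.Adj] {m : ℕ}
    (hm : 0 < m) (hst : Disjoint s t) (hs : #s = m) (ht : #t = m)
    (hu : G.IsCompleteAnticomplete u s t ∨ G.IsCompleteAnticomplete u t s ∨
      #{w ∈ s | G.Adj u w} = #{w ∈ t | G.Adj u w})
    {v : V} (hv : v ∈ s ∨ v ∈ t)
    (hG' : G'.Adj u v ↔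
      Xor (G.IsCompleteAnticomplete u s t ∨ G.IsCompleteAnticomplete u t s) (G.Adj u v)) :
    G'.adjMatrix ℝ u v = G.adjMatrix ℝ u v -
      (m : ℝ)⁻¹ * ((G.adjMatrix ℝ *ᵥ signedIndicator s t) u * signedIndicator s t v) := by
  have hm' : (m : ℝ) ≠ 0 := by positivity
  rcases hu with hu | hu | hu
  · rw [adjMatrix_mulVec_signedIndicator_of_isCompleteAnticomplete hu, hs]
    rcases hv with hv | hv
    · simp [hG', hu, hu.1 v hv, signedIndicator_of_mem_left hst hv, hm']
    · simp [hG', hu, hu.2 v hv, signedIndicator_of_mem_right hst hv, hm']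
  · rw [adjMatrix_mulVec_signedIndicator_of_isCompleteAnticomplete_swap hu, ht]
    rcases hv with hv | hv
    · simp [hG', hu, hu.2 v hv, signedIndicator_of_mem_left hst hv, hm']
    · simp [hG', hu, hu.1 v hv, signedIndicator_of_mem_right hst hv, hm']
  · have hnot : ¬ (G.IsCompleteAnticomplete u s t ∨ G.IsCompleteAnticomplete u t s) := by
      rintro (h | h) <;>
        rw [filter_true_of_mem h.1, filter_false_of_mem h.2, card_empty] at hu <;> omega
    rw [adjMatrix_mulVec_signedIndicator, hu, sub_self, zero_mul, mul_zero, sub_zero]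
    simp [hG', hnot]

theorem adjMatrix_eq_of_switching {G' : SimpleGraph V} [DecidableRel G'.Adj] {m : ℕ}
    (hm : 0 < m) {V1 V2 W : Finset V} (hcard1 : #V1 = m) (hcard2 : #V2 = m)
    (h12 : Disjoint V1 V2) (h1W : Disjoint V1 W) (h2W : Disjoint V2 W)
    (hcover : ∀ v, v ∈ V1 ∨ v ∈ V2 ∨ v ∈ W)
    (hW : ∀ v ∈ W, G.IsCompleteAnticomplete v V1 V2 ∨ G.IsCompleteAnticomplete v V2 V1 ∨
      #{w ∈ V1 | G.Adj v w} = #{w ∈ V2 | G.Adj v w})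
    (hG' : ∀ u v, G'.Adj u v ↔
      Xor ((u ∈ W ∧ (v ∈ V1 ∨ v ∈ V2) ∧
          (G.IsCompleteAnticomplete u V1 V2 ∨ G.IsCompleteAnticomplete u V2 V1)) ∨
        (v ∈ W ∧ (u ∈ V1 ∨ u ∈ V2) ∧
          (G.IsCompleteAnticomplete v V1 V2 ∨ G.IsCompleteAnticomplete v V2 V1)))
        (G.Adj u v))
    {z : V → ℝ} (hz : ∀ v ∉ W, z v = 0)
    (hzW : ∀ u ∈ W, z u = (G.adjMatrix ℝ *ᵥ signedIndicator V1 V2) u) :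
    G'.adjMatrix ℝ = G.adjMatrix ℝ - (m : ℝ)⁻¹ •
      (vecMulVec (signedIndicator V1 V2) z + vecMulVec z (signedIndicator V1 V2)) := by
  have hW1 : ∀ v ∈ W, v ∉ V1 := fun v hv => disjoint_right.1 h1W hv
  have hW2 : ∀ v ∈ W, v ∉ V2 := fun v hv => disjoint_right.1 h2W hv
  have hχW : ∀ v ∈ W, signedIndicator V1 V2 v = 0 := fun v hv =>
    signedIndicator_of_notMem (hW1 v hv) (hW2 v hv)
  have hmixed : ∀ u v, u ∈ W → v ∉ W → G'.adjMatrix ℝ u v = G.adjMatrix ℝ u v -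
      (m : ℝ)⁻¹ * (signedIndicator V1 V2 u * z v + z u * signedIndicator V1 V2 v) := by
    intro u v hu hv
    have hv' : v ∈ V1 ∨ v ∈ V2 := by have := hcover v; tauto
    rw [hχW u hu, hz v hv, hzW u hu, zero_mul, zero_add]
    exact adjMatrix_apply_of_adj_iff_xor_s10 hm h12 hcard1 hcard2 (hW u hu) hv'
      (by rw [hG']; simp [hu, hv, hv'])
  ext u v
  simp only [Matrix.sub_apply, Matrix.smul_apply, Matrix.add_apply, vecMulVec_apply, smul_eq_mul]
  by_cases hu : u ∈ W <;> by_cases hv : v ∈ W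
  · rw [hχW u hu, hχW v hv]
    simp [hG', hu, hv, hW1, hW2]
  · exact hmixed u v hu hv
  · rw [G'.isSymm_adjMatrix.apply, G.isSymm_adjMatrix.apply, hmixed v u hv hu, add_comm]
    ring
  · rw [hz u hu, hz v hv]
    simp [hG', hu, hv]

end SimpleGraph

end

/-- **Generalized GM-switching (Wang–Qiu–Hu).** Let the vertex set of a finite simple
graph `G` be partitioned as `V1 ⊔ V2 ⊔ W` with `|V1| = |V2| = m > 0`, such that there
is an integer `ℓ` with `d₁(v) − d₂(v) = ℓ` for all `v ∈ V1` and `d₂(u) − d₁(u) = ℓ`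
for all `u ∈ V2`, and every `v ∈ W` is (i) adjacent to all of `V1` and none of `V2`,
or (ii) adjacent to all of `V2` and none of `V1`, or (iii) has `d₁(v) = d₂(v)`.
Then the graph `G'` obtained by interchanging, for each `v ∈ W` of type (i) or (ii),
full adjacency to one part with full adjacency to the other part, is cospectral
with `G`. -/
theorem generalized_GM_switching {V : Type*} [Fintype V] [DecidableEq V]
    (G G' : SimpleGraph V) [DecidableRel G.Adj] [DecidableRel G'.Adj]
    (m : ℕ) (hm : 0 < m) (V1 V2 W : Finset V)
    (hcard1 : V1.card = m) (hcard2 : V2.card = m)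
    (h12 : Disjoint V1 V2) (h1W : Disjoint V1 W) (h2W : Disjoint V2 W)
    (hcover : ∀ v, v ∈ V1 ∨ v ∈ V2 ∨ v ∈ W)
    (ℓ : ℤ)
    (hV1 : ∀ v ∈ V1,
      ((V1.filter (fun w => G.Adj v w)).card : ℤ) -
        (V2.filter (fun w => G.Adj v w)).card = ℓ)
    (hV2 : ∀ u ∈ V2,
      ((V2.filter (fun w => G.Adj u w)).card : ℤ) -
        (V1.filter (fun w => G.Adj u w)).card = ℓ)
    (hW : ∀ v ∈ W,
      ((∀ w ∈ V1, G.Adj v w) ∧ (∀ w ∈ V2, ¬ G.Adj v w)) ∨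
      ((∀ w ∈ V2, G.Adj v w) ∧ (∀ w ∈ V1, ¬ G.Adj v w)) ∨
      (V1.filter (fun w => G.Adj v w)).card = (V2.filter (fun w => G.Adj v w)).card)
    -- `G'` flips the adjacency between a type (i) or (ii) vertex of `W` and `V1 ∪ V2`
    (hG' : ∀ u v, G'.Adj u v ↔
      Xor'
        ((u ∈ W ∧ (v ∈ V1 ∨ v ∈ V2) ∧
            (((∀ w ∈ V1, G.Adj u w) ∧ (∀ w ∈ V2, ¬ G.Adj u w)) ∨
             ((∀ w ∈ V2, G.Adj u w) ∧ (∀ w ∈ V1, ¬ G.Adj u w)))) ∨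
         (v ∈ W ∧ (u ∈ V1 ∨ u ∈ V2) ∧
            (((∀ w ∈ V1, G.Adj v w) ∧ (∀ w ∈ V2, ¬ G.Adj v w)) ∨
             ((∀ w ∈ V2, G.Adj v w) ∧ (∀ w ∈ V1, ¬ G.Adj v w)))))
        (G.Adj u v)) :
    (G.adjMatrix ℝ).charpoly = (G'.adjMatrix ℝ).charpoly := by
  set χ := signedIndicator V1 V2
  set z := G.adjMatrix ℝ *ᵥ χ - (ℓ : ℝ) • χ
  have hz : ∀ v ∉ W, z v = 0 := fun v hv => by
    have hv' : v ∈ V1 ∨ v ∈ V2 := by have := hcover v; tauto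
    exact sub_eq_zero.2 (SimpleGraph.adjMatrix_mulVec_signedIndicator_eq_mul h12 hV1 hV2 hv')
  have hχW : ∀ v ∈ W, χ v = 0 := fun v hv =>
    signedIndicator_of_notMem (disjoint_right.1 h1W hv) (disjoint_right.1 h2W hv)
  have hzW : ∀ u ∈ W, z u = (G.adjMatrix ℝ *ᵥ χ) u := fun u hu => by simp [z, hχW u hu]
  have hχz : χ ⬝ᵥ z = 0 := sum_eq_zero fun v _ => by
    by_cases hv : v ∈ W <;> simp [hχW, hz, hv]
  rw [SimpleGraph.adjMatrix_eq_of_switching hm hcard1 hcard2 h12 h1W h2W hcover hW hG' hz hzW,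
    charpoly_sub_smul_vecMulVec_add_vecMulVec G.isSymm_adjMatrix (by positivity)
      (by rw [signedIndicator_dotProduct_self h12, hcard1, hcard2]; ring) hχz
      (add_sub_cancel ((ℓ : ℝ) • χ) _).symm]
end

section
/- (Generalized GM-switching for signed graphs) Let m, d be positive integers and let A be the symmetric (2m+d)×(2m+d) real matrix with entries in {−1,0,1} and zero diagonal, written in block form A = [[A_1, B, C_1], [Bᵀ, A_2, C_2], [C_1ᵀ, C_2ᵀ, D]], where A_1, A_2 are symmetric m×m, B is m×m, C_1, C_2 are m×d, and D is symmetric d×d. Suppose there is a real number ℓ such that for every row index i, the sum over j of ((A_1)_{ij} − B_{ij}) equals ℓ and the sum over j of ((A_2)_{ij} − B_{ji}) equals ℓ; and suppose each column index j of the pair (C_1, C_2) with column segments c^{j,1} (from C_1) and c^{j,2} (from C_2) satisfies one of: (i) c^{j,1} = 1_m and c^{j,2} = 0_m, or vice versa; (ii) c^{j,1} = −1_m and c^{j,2} = 0_m, or vice versa; (iii) the entries of c^{j,1} and of c^{j,2} have equal sums; (iv) c^{j,1} = 1_m and c^{j,2} = −1_m, or vice versa. Let A′ be obtained from A by replacing,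 for each column j, the pair (c^{j,1}, c^{j,2}) by the swapped pair (c^{j,2}, c^{j,1}) in cases (i), (ii) and (iv), and leaving it unchanged in case (iii) (and updating C_1ᵀ, C_2ᵀ symmetrically). Then A and A′ have the same characteristic polynomial. -/
open Matrix Polynomial

/-- Conjugating by an involution preserves the characteristic polynomial. -/
lemma charpoly_conj_involution {n : Type*} [Fintype n] [DecidableEq n]
    (Q M : Matrix n n ℝ) (hQ : Q * Q = 1) :
    (Q * M * Q).charpoly = M.charpoly := by
  classical
  set Qp : Matrix n n ℝ[X] := (C : ℝ →+* ℝ[X]).mapMatrix Q with hQpdef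
  have hQpQp : Qp * Qp = 1 := by
    rw [hQpdef, ← _root_.map_mul, hQ, _root_.map_one]
  have hscal : Qp * Matrix.scalar n (X : ℝ[X]) * Qp = Matrix.scalar n (X : ℝ[X]) := by
    have hc : Matrix.scalar n (X : ℝ[X]) * Qp = Qp * Matrix.scalar n (X : ℝ[X]) :=
      Matrix.scalar_commute (X : ℝ[X]) (fun r' => Commute.all _ _) Qp
    rw [← hc, mul_assoc, hQpQp, mul_one]
  have hmap : (C : ℝ →+* ℝ[X]).mapMatrix (Q * M * Q) =
      Qp * (C : ℝ →+* ℝ[X]).mapMatrix M * Qp := by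
    rw [hQpdef, ← _root_.map_mul, ← _root_.map_mul]
  have hchar : (Q * M * Q).charmatrix = Qp * M.charmatrix * Qp := by
    rw [Matrix.charmatrix, Matrix.charmatrix, mul_sub, sub_mul, hscal, hmap]
  have hdetQ : Qp.det * Qp.det = 1 := by
    rw [← Matrix.det_mul, hQpQp, Matrix.det_one]
  rw [Matrix.charpoly, Matrix.charpoly, hchar, Matrix.det_mul, Matrix.det_mul]
  calc Qp.det * M.charmatrix.det * Qp.det
      = M.charmatrix.det * (Qp.det * Qp.det) := by ring
    _ = M.charmatrix.det := by rw [hdetQ, mul_one]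

/-- **Generalized GM-switching for signed graphs.** The adjacency matrix is written in
block form `A = [[A₁, B, C₁], [Bᵀ, A₂, C₂], [C₁ᵀ, C₂ᵀ, D]]`; under the net-degree
condition on `(A₁, A₂, B)` and the column conditions on `(C₁, C₂)`, swapping the
appropriate column pairs of `(C₁, C₂)` produces a cospectral matrix. -/
theorem generalized_GM_switching_signed (m d : ℕ) (hm : 0 < m) (hd : 0 < d)
    (A1 A2 B : Matrix (Fin m) (Fin m) ℝ)
    (C1 C2 C1' C2' : Matrix (Fin m) (Fin d) ℝ)
    (D : Matrix (Fin d) (Fin d) ℝ)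
    (hA1 : A1.IsSymm) (hA2 : A2.IsSymm) (hD : D.IsSymm)
    -- all entries lie in `{-1, 0, 1}`
    (hentA1 : ∀ i j, A1 i j = -1 ∨ A1 i j = 0 ∨ A1 i j = 1)
    (hentA2 : ∀ i j, A2 i j = -1 ∨ A2 i j = 0 ∨ A2 i j = 1)
    (hentB : ∀ i j, B i j = -1 ∨ B i j = 0 ∨ B i j = 1)
    (hentC1 : ∀ i j, C1 i j = -1 ∨ C1 i j = 0 ∨ C1 i j = 1)
    (hentC2 : ∀ i j, C2 i j = -1 ∨ C2 i j = 0 ∨ C2 i j = 1)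
    (hentD : ∀ i j, D i j = -1 ∨ D i j = 0 ∨ D i j = 1)
    -- zero diagonal
    (hdiagA1 : ∀ i, A1 i i = 0) (hdiagA2 : ∀ i, A2 i i = 0) (hdiagD : ∀ i, D i i = 0)
    -- the net-degree condition, with constant `ℓ`
    (ℓ : ℝ)
    (hrow1 : ∀ i, ∑ j, (A1 i j - B i j) = ℓ)
    (hrow2 : ∀ i, ∑ j, (A2 i j - B j i) = ℓ)
    -- each column of `(C₁, C₂)` is of one of the four admissible types; in cases (i),
    -- (ii) and (iv) the two column segments are swapped in `(C₁', C₂')`, while in case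
    -- (iii) they are unchanged
    (hcols : ∀ j,
      (((((∀ i, C1 i j = 1) ∧ (∀ i, C2 i j = 0)) ∨
          ((∀ i, C1 i j = 0) ∧ (∀ i, C2 i j = 1))) ∨
        (((∀ i, C1 i j = -1) ∧ (∀ i, C2 i j = 0)) ∨
          ((∀ i, C1 i j = 0) ∧ (∀ i, C2 i j = -1))) ∨
        (((∀ i, C1 i j = 1) ∧ (∀ i, C2 i j = -1)) ∨
          ((∀ i, C1 i j = -1) ∧ (∀ i, C2 i j = 1)))) ∧
        (∀ i, C1' i j = C2 i j ∧ C2' i j = C1 i j)) ∨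
      ((∑ i, C1 i j = ∑ i, C2 i j) ∧
        (∀ i, C1' i j = C1 i j ∧ C2' i j = C2 i j))) :
    (Matrix.fromBlocks (Matrix.fromBlocks A1 B Bᵀ A2)
        (Matrix.of fun i j => Sum.elim (fun a => C1 a j) (fun b => C2 b j) i)
        (Matrix.of fun i j => Sum.elim (fun a => C1 a j) (fun b => C2 b j) i)ᵀ
        D).charpoly =
      (Matrix.fromBlocks (Matrix.fromBlocks A1 B Bᵀ A2)
        (Matrix.of fun i j => Sum.elim (fun a => C1' a j) (fun b => C2' b j) i)
        (Matrix.of fun i j => Sum.elim (fun a => C1' a j) (fun b => C2' b j) i)ᵀ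
        D).charpoly := by
  classical
  have hm' : (m : ℝ) ≠ 0 := Nat.cast_ne_zero.mpr hm.ne'
  -- The switching block
  set K : Matrix (Fin m) (Fin m) ℝ := Matrix.of (fun _ _ => (m : ℝ)⁻¹) with hKdef
  set Q2 : Matrix (Fin m ⊕ Fin m) (Fin m ⊕ Fin m) ℝ :=
    Matrix.fromBlocks (1 - K) K K (1 - K) with hQ2def
  set M : Matrix (Fin m ⊕ Fin m) (Fin m ⊕ Fin m) ℝ := Matrix.fromBlocks A1 B Bᵀ A2 with hMdef
  set Cb : Matrix (Fin m ⊕ Fin m) (Fin d) ℝ :=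
    Matrix.of (fun i j => Sum.elim (fun a => C1 a j) (fun b => C2 b j) i) with hCbdef
  set Cb' : Matrix (Fin m ⊕ Fin m) (Fin d) ℝ :=
    Matrix.of (fun i j => Sum.elim (fun a => C1' a j) (fun b => C2' b j) i) with hCb'def
  set Q : Matrix ((Fin m ⊕ Fin m) ⊕ Fin d) ((Fin m ⊕ Fin m) ⊕ Fin d) ℝ :=
    Matrix.fromBlocks Q2 0 0 1 with hQdef
  -- basic K facts
  have hKK : K * K = K := by
    ext i j
    simp [hKdef, Matrix.mul_apply, Finset.sum_const, Finset.card_univ]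
    field_simp
  have hKmul : ∀ (X : Matrix (Fin m) (Fin m) ℝ) i j,
      (K * X) i j = (m : ℝ)⁻¹ * ∑ k, X k j := by
    intro X i j
    simp [hKdef, Matrix.mul_apply, Finset.mul_sum]
  have hmulK : ∀ (X : Matrix (Fin m) (Fin m) ℝ) i j,
      (X * K) i j = (m : ℝ)⁻¹ * ∑ k, X i k := by
    intro X i j
    simp only [hKdef, Matrix.mul_apply, Matrix.of_apply]
    rw [← Finset.sum_mul, mul_comm]
  -- Q2 is an involution
  have hQ2Q2 : Q2 * Q2 = 1 := by
    rw [hQ2def, Matrix.fromBlocks_multiply, ← Matrix.fromBlocks_one, Matrix.fromBlocks_inj]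
    refine ⟨?_, ?_, ?_, ?_⟩ <;>
      · simp only [mul_sub, sub_mul, mul_one, one_mul, hKK]
        abel
  -- row sum facts
  have hsA1 : ∀ i, ∑ k, A1 i k = ℓ + ∑ k, B i k := by
    intro i
    have := hrow1 i
    rw [Finset.sum_sub_distrib] at this
    linarith
  have hsA2 : ∀ i, ∑ k, A2 i k = ℓ + ∑ k, B k i := by
    intro i
    have := hrow2 i
    rw [Finset.sum_sub_distrib] at this
    linarith
  have hA1sym : ∀ i j, A1 i j = A1 j i := fun i j => by
    conv_lhs => rw [← hA1]
    rfl
  have hA2sym : ∀ i j, A2 i j = A2 j i := fun i j => by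
    conv_lhs => rw [← hA2]
    rfl
  have hcolA1 : ∀ j, ∑ k, A1 k j = ℓ + ∑ k, B j k := by
    intro j
    rw [Finset.sum_congr rfl (fun k _ => hA1sym k j)]
    exact hsA1 j
  have hcolA2 : ∀ j, ∑ k, A2 k j = ℓ + ∑ k, B k j := by
    intro j
    rw [Finset.sum_congr rfl (fun k _ => hA2sym k j)]
    exact hsA2 j
  -- Q2 commutes with M
  have hQ2M : Q2 * M = M * Q2 := by
    rw [hQ2def, hMdef, Matrix.fromBlocks_multiply, Matrix.fromBlocks_multiply,
      Matrix.fromBlocks_inj]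
    refine ⟨?_, ?_, ?_, ?_⟩
    · -- (1-K)*A1 + K*Bᵀ = A1*(1-K) + B*K
      ext i j
      have l1 : ((1 - K) * A1) i j = A1 i j - (m : ℝ)⁻¹ * ∑ k, A1 k j := by
        rw [sub_mul, one_mul, Matrix.sub_apply, hKmul]
      have l2 : (K * Bᵀ) i j = (m : ℝ)⁻¹ * ∑ k, B j k := by
        rw [hKmul]; simp [Matrix.transpose_apply]
      have r1 : (A1 * (1 - K)) i j = A1 i j - (m : ℝ)⁻¹ * ∑ k, A1 i k := by
        rw [mul_sub, mul_one, Matrix.sub_apply, hmulK]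
      have r2 : (B * K) i j = (m : ℝ)⁻¹ * ∑ k, B i k := hmulK B i j
      show ((1 - K) * A1) i j + (K * Bᵀ) i j = (A1 * (1 - K)) i j + (B * K) i j
      rw [l1, l2, r1, r2, hcolA1 j, hsA1 i]
      ring
    · -- (1-K)*B + K*A2 = A1*K + B*(1-K)
      ext i j
      have l1 : ((1 - K) * B) i j = B i j - (m : ℝ)⁻¹ * ∑ k, B k j := by
        rw [sub_mul, one_mul, Matrix.sub_apply, hKmul]
      have l2 : (K * A2) i j = (m : ℝ)⁻¹ * ∑ k, A2 k j := hKmul A2 i j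
      have r1 : (A1 * K) i j = (m : ℝ)⁻¹ * ∑ k, A1 i k := hmulK A1 i j
      have r2 : (B * (1 - K)) i j = B i j - (m : ℝ)⁻¹ * ∑ k, B i k := by
        rw [mul_sub, mul_one, Matrix.sub_apply, hmulK]
      show ((1 - K) * B) i j + (K * A2) i j = (A1 * K) i j + (B * (1 - K)) i j
      rw [l1, l2, r1, r2, hcolA2 j, hsA1 i]
      ring
    · -- K*A1 + (1-K)*Bᵀ = Bᵀ*(1-K) + A2*K
      ext i j
      have l1 : (K * A1) i j = (m : ℝ)⁻¹ * ∑ k, A1 k j := hKmul A1 i j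
      have l2 : ((1 - K) * Bᵀ) i j = B j i - (m : ℝ)⁻¹ * ∑ k, B j k := by
        rw [sub_mul, one_mul, Matrix.sub_apply, hKmul]
        simp [Matrix.transpose_apply]
      have r1 : (Bᵀ * (1 - K)) i j = B j i - (m : ℝ)⁻¹ * ∑ k, B k i := by
        rw [mul_sub, mul_one, Matrix.sub_apply, hmulK]
        simp [Matrix.transpose_apply]
      have r2 : (A2 * K) i j = (m : ℝ)⁻¹ * ∑ k, A2 i k := hmulK A2 i j
      show (K * A1) i j + ((1 - K) * Bᵀ) i j = (Bᵀ * (1 - K)) i j + (A2 * K) i j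
      rw [l1, l2, r1, r2, hcolA1 j, hsA2 i]
      ring
    · -- K*B + (1-K)*A2 = Bᵀ*K + A2*(1-K)
      ext i j
      have l1 : (K * B) i j = (m : ℝ)⁻¹ * ∑ k, B k j := hKmul B i j
      have l2 : ((1 - K) * A2) i j = A2 i j - (m : ℝ)⁻¹ * ∑ k, A2 k j := by
        rw [sub_mul, one_mul, Matrix.sub_apply, hKmul]
      have r1 : (Bᵀ * K) i j = (m : ℝ)⁻¹ * ∑ k, B k i := by
        rw [hmulK]; simp [Matrix.transpose_apply]
      have r2 : (A2 * (1 - K)) i j = A2 i j - (m : ℝ)⁻¹ * ∑ k, A2 i k := by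
        rw [mul_sub, mul_one, Matrix.sub_apply, hmulK]
      show (K * B) i j + ((1 - K) * A2) i j = (Bᵀ * K) i j + (A2 * (1 - K)) i j
      rw [l1, l2, r1, r2, hcolA2 j, hsA2 i]
      ring
  -- Q2 sends Cb to Cb'
  have hcol : ∀ j i,
      (C1 i j - (m : ℝ)⁻¹ * ∑ k, C1 k j) + (m : ℝ)⁻¹ * ∑ k, C2 k j = C1' i j ∧
      (m : ℝ)⁻¹ * (∑ k, C1 k j) + (C2 i j - (m : ℝ)⁻¹ * ∑ k, C2 k j) = C2' i j := by
    intro j i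
    have hconst : ∀ a b : ℝ, (∀ i, C1 i j = a) → (∀ i, C2 i j = b) →
        (C1 i j - (m : ℝ)⁻¹ * ∑ k, C1 k j) + (m : ℝ)⁻¹ * ∑ k, C2 k j = C2 i j ∧
        (m : ℝ)⁻¹ * (∑ k, C1 k j) + (C2 i j - (m : ℝ)⁻¹ * ∑ k, C2 k j) = C1 i j := by
      intro a b ha hb
      have s1 : ∑ k, C1 k j = (m : ℝ) * a := by
        simp [ha, Finset.sum_const, Finset.card_univ, nsmul_eq_mul]
      have s2 : ∑ k, C2 k j = (m : ℝ) * b := by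
        simp [hb, Finset.sum_const, Finset.card_univ, nsmul_eq_mul]
      rw [s1, s2, ha i, hb i]
      constructor <;> field_simp <;> ring
    rcases hcols j with ⟨hcase, hsw⟩ | ⟨hsum, hid⟩
    · obtain ⟨h1, h2⟩ := hsw i
      rw [h1, h2]
      rcases hcase with (⟨ha, hb⟩ | ⟨ha, hb⟩) | (⟨ha, hb⟩ | ⟨ha, hb⟩) | (⟨ha, hb⟩ | ⟨ha, hb⟩) <;>
        exact hconst _ _ ha hb
    · obtain ⟨h1, h2⟩ := hid i
      rw [h1, h2, hsum]
      constructor <;> ring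
  have hQ2C : Q2 * Cb = Cb' := by
    ext i j
    cases i with
    | inl i =>
      have : (Q2 * Cb) (Sum.inl i) j =
          ∑ k, ((1 : Matrix (Fin m) (Fin m) ℝ) - K) i k * C1 k j + ∑ k, K i k * C2 k j := by
        rw [Matrix.mul_apply, Fintype.sum_sum_type]
        rfl
      rw [this]
      have e1 : ∑ k, ((1 : Matrix (Fin m) (Fin m) ℝ) - K) i k * C1 k j =
          C1 i j - (m : ℝ)⁻¹ * ∑ k, C1 k j := by
        simp [Matrix.sub_apply, Matrix.one_apply, hKdef, sub_mul, Finset.sum_sub_distrib,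
          Finset.mul_sum, ite_mul]
      have e2 : ∑ k, K i k * C2 k j = (m : ℝ)⁻¹ * ∑ k, C2 k j := by
        simp [hKdef, Finset.mul_sum]
      rw [e1, e2]
      exact (hcol j i).1
    | inr i =>
      have : (Q2 * Cb) (Sum.inr i) j =
          ∑ k, K i k * C1 k j + ∑ k, ((1 : Matrix (Fin m) (Fin m) ℝ) - K) i k * C2 k j := by
        rw [Matrix.mul_apply, Fintype.sum_sum_type]
        rfl
      rw [this]
      have e1 : ∑ k, K i k * C1 k j = (m : ℝ)⁻¹ * ∑ k, C1 k j := by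
        simp [hKdef, Finset.mul_sum]
      have e2 : ∑ k, ((1 : Matrix (Fin m) (Fin m) ℝ) - K) i k * C2 k j =
          C2 i j - (m : ℝ)⁻¹ * ∑ k, C2 k j := by
        simp [Matrix.sub_apply, Matrix.one_apply, hKdef, sub_mul, Finset.sum_sub_distrib,
          Finset.mul_sum, ite_mul]
      rw [e1, e2]
      exact (hcol j i).2
  -- Q2 is symmetric
  have hKt : Kᵀ = K := by
    ext i j
    simp [Matrix.transpose_apply, hKdef]
  have hQ2symm : Q2ᵀ = Q2 := by
    rw [hQ2def, Matrix.fromBlocks_transpose, Matrix.transpose_sub, Matrix.transpose_one, hKt]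
  have hCQ2 : Cbᵀ * Q2 = Cb'ᵀ := by
    rw [← hQ2C, Matrix.transpose_mul, hQ2symm]
  -- Q is an involution
  have hQQ : Q * Q = 1 := by
    rw [hQdef, Matrix.fromBlocks_multiply, ← Matrix.fromBlocks_one]
    simp [hQ2Q2]
  -- the conjugation identity
  have hconj : Q * Matrix.fromBlocks M Cb Cbᵀ D * Q = Matrix.fromBlocks M Cb' Cb'ᵀ D := by
    rw [hQdef, Matrix.fromBlocks_multiply, Matrix.fromBlocks_multiply]
    simp only [Matrix.zero_mul, Matrix.mul_zero, Matrix.one_mul, Matrix.mul_one,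
      add_zero, zero_add]
    rw [hQ2M, mul_assoc, hQ2Q2, mul_one, hQ2C, hCQ2]
  calc (Matrix.fromBlocks M Cb Cbᵀ D).charpoly
      = (Q * Matrix.fromBlocks M Cb Cbᵀ D * Q).charpoly :=
        (charpoly_conj_involution Q _ hQQ).symm
    _ = (Matrix.fromBlocks M Cb' Cb'ᵀ D).charpoly := by rw [hconj]
end

section
/- For every positive integer m, the matrix U_{2m} satisfies U_{2m} · U_{2m} = I_{2m}; in particular U_{2m} is a symmetric rational orthogonal involution. -/
open Matrix

/-- For a positive integer `m`, `Umat m` is the `2m × 2m` matrix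
`U_{2m} = I_{2m} + (1/m) • [[−J_m, J_m], [J_m, −J_m]]` in block form,
where `J_m` is the all-ones `m × m` matrix. -/
noncomputable def Umat (m : ℕ) : Matrix (Fin m ⊕ Fin m) (Fin m ⊕ Fin m) ℝ :=
  1 + ((m : ℝ))⁻¹ •
    Matrix.fromBlocks (-(Matrix.of fun _ _ => (1 : ℝ))) (Matrix.of fun _ _ => (1 : ℝ))
      (Matrix.of fun _ _ => (1 : ℝ)) (-(Matrix.of fun _ _ => (1 : ℝ)))

lemma Jmul (m : ℕ) :
    (Matrix.of fun _ _ => (1 : ℝ)) * (Matrix.of fun _ _ => (1 : ℝ))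
      = (m : ℝ) • (Matrix.of fun _ _ => (1 : ℝ) : Matrix (Fin m) (Fin m) ℝ) := by
  ext i j
  simp [Matrix.mul_apply]

theorem Umat_mul_self (m : ℕ) (hm : 0 < m) :
    Umat m * Umat m = 1 ∧ (Umat m).IsSymm := by
  have hm' : (m : ℝ) ≠ 0 := Nat.cast_ne_zero.mpr hm.ne'
  set J : Matrix (Fin m) (Fin m) ℝ := Matrix.of fun _ _ => (1 : ℝ) with hJ
  set B : Matrix (Fin m ⊕ Fin m) (Fin m ⊕ Fin m) ℝ := Matrix.fromBlocks (-J) J J (-J) with hB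
  have hBB : B * B = -((2 * (m : ℝ)) • B) := by
    rw [hB, Matrix.fromBlocks_multiply]
    have hJJ : J * J = (m : ℝ) • J := Jmul m
    have h1 : J * J + J * J = (2 * (m:ℝ)) • J := by
      rw [hJJ, ← two_smul ℝ, smul_smul]
    have h2 : -(J * J) + -(J * J) = -((2 * (m:ℝ)) • J) := by
      rw [hJJ, ← neg_add, ← two_smul ℝ, smul_smul]
    simp only [neg_mul, mul_neg, neg_neg]
    rw [h1, h2]
    simp [Matrix.fromBlocks_smul, Matrix.fromBlocks_neg]
  constructor
  · show (1 + ((m : ℝ))⁻¹ • B) * (1 + ((m : ℝ))⁻¹ • B) = 1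
    simp only [add_mul, mul_add, one_mul, mul_one, Matrix.mul_smul, Matrix.smul_mul,
      hBB, smul_neg, smul_smul]
    have h3 : ((m : ℝ))⁻¹ * (((m : ℝ))⁻¹ * (2 * (m : ℝ))) = 2 * ((m : ℝ))⁻¹ := by
      field_simp
    rw [h3, two_mul, add_smul]
    abel
  · show (1 + ((m : ℝ))⁻¹ • B).IsSymm
    have hBs : B.IsSymm := by
      rw [Matrix.IsSymm, hB, Matrix.fromBlocks_transpose]
      congr 1 <;> ext i j <;> simp
    exact (Matrix.isSymm_one.add (hBs.smul _))
end

section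
/- Let m be a positive integer, let A_1 and A_2 be symmetric m×m real matrices, let B be an m×m real matrix, and suppose there is a real number ℓ such that for every index i ∈ {1, …, m}: the sum over j of ((A_1)_{ij} − B_{ij}) equals ℓ, and the sum over j of ((A_2)_{ij} − B_{ji}) equals ℓ. Then the block matrix M = [[A_1, B], [Bᵀ, A_2]] satisfies U_{2m} · M · U_{2m} = M. -/
open Matrix

theorem Umat_conj_block (m : ℕ) (hm : 0 < m)
    (A1 A2 B : Matrix (Fin m) (Fin m) ℝ)
    (hA1 : A1.IsSymm) (hA2 : A2.IsSymm)
    (ℓ : ℝ)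
    (hrow1 : ∀ i, ∑ j, (A1 i j - B i j) = ℓ)
    (hrow2 : ∀ i, ∑ j, (A2 i j - B j i) = ℓ) :
    Umat m * Matrix.fromBlocks A1 B Bᵀ A2 * Umat m = Matrix.fromBlocks A1 B Bᵀ A2 := by
  have hmne : (m : ℝ) ≠ 0 := Nat.cast_ne_zero.2 hm.ne'
  set V : Matrix (Fin m ⊕ Fin m) (Fin m ⊕ Fin m) ℝ :=
    ((m : ℝ))⁻¹ • Matrix.fromBlocks (-(Matrix.of fun _ _ => (1 : ℝ)))
      (Matrix.of fun _ _ => (1 : ℝ)) (Matrix.of fun _ _ => (1 : ℝ))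
      (-(Matrix.of fun _ _ => (1 : ℝ))) with hV
  set M : Matrix (Fin m ⊕ Fin m) (Fin m ⊕ Fin m) ℝ := Matrix.fromBlocks A1 B Bᵀ A2 with hM
  have hU : Umat m = 1 + V := rfl
  -- column/row sum facts
  have h1 : ∀ j : Fin m, ∑ k, A1 k j - ∑ k, B j k = ℓ := by
    intro j
    rw [← Finset.sum_sub_distrib, ← hrow1 j]
    exact Finset.sum_congr rfl fun k _ => by rw [hA1.apply]
  have h2 : ∀ j : Fin m, ∑ k, A2 k j - ∑ k, B k j = ℓ := by
    intro j
    rw [← Finset.sum_sub_distrib, ← hrow2 j]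
    exact Finset.sum_congr rfl fun k _ => by rw [hA2.apply]
  have h1' : ∀ i : Fin m, ∑ k, A1 i k - ∑ k, B i k = ℓ := by
    intro i; rw [← Finset.sum_sub_distrib]; exact hrow1 i
  have h2' : ∀ i : Fin m, ∑ k, A2 i k - ∑ k, B k i = ℓ := by
    intro i; rw [← Finset.sum_sub_distrib]; exact hrow2 i
  have hVM : V * M = ℓ • V := by
    ext i j
    rcases i with i | i <;> rcases j with j | j <;>
      simp only [hV, hM, Matrix.mul_apply, Matrix.smul_apply, Fintype.sum_sum_type,
        Matrix.fromBlocks_apply₁₁, Matrix.fromBlocks_apply₁₂, Matrix.fromBlocks_apply₂₁,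
        Matrix.fromBlocks_apply₂₂, Matrix.neg_apply, Matrix.of_apply, Matrix.transpose_apply,
        smul_eq_mul, ← Finset.mul_sum]
    · linear_combination (-(↑m : ℝ)⁻¹) * h1 j
    · linear_combination ((↑m : ℝ)⁻¹) * h2 j
    · linear_combination ((↑m : ℝ)⁻¹) * h1 j
    · linear_combination (-(↑m : ℝ)⁻¹) * h2 j
  have hMV : M * V = ℓ • V := by
    ext i j
    rcases i with i | i <;> rcases j with j | j <;>
      simp only [hV, hM, Matrix.mul_apply, Matrix.smul_apply, Fintype.sum_sum_type,
        Matrix.fromBlocks_apply₁₁, Matrix.fromBlocks_apply₁₂, Matrix.fromBlocks_apply₂₁,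
        Matrix.fromBlocks_apply₂₂, Matrix.neg_apply, Matrix.of_apply, Matrix.transpose_apply,
        smul_eq_mul, ← Finset.mul_sum, ← Finset.sum_mul]
    · linear_combination (-(↑m : ℝ)⁻¹) * h1' i
    · linear_combination ((↑m : ℝ)⁻¹) * h1' i
    · linear_combination ((↑m : ℝ)⁻¹) * h2' i
    · linear_combination (-(↑m : ℝ)⁻¹) * h2' i
  have hVV : V * V = (-2 : ℝ) • V := by
    ext i j
    rcases i with i | i <;> rcases j with j | j <;>
      simp only [hV, Matrix.mul_apply, Matrix.smul_apply, Fintype.sum_sum_type,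
        Matrix.fromBlocks_apply₁₁, Matrix.fromBlocks_apply₁₂, Matrix.fromBlocks_apply₂₁,
        Matrix.fromBlocks_apply₂₂, Matrix.neg_apply, Matrix.of_apply,
        smul_eq_mul, Finset.sum_const, Finset.card_univ, Fintype.card_fin, nsmul_eq_mul] <;>
      field_simp <;> ring
  calc (1 + V) * M * (1 + V)
      = M + (V * M + (M * V + V * M * V)) := by noncomm_ring
    _ = M := by
        rw [hVM, hMV, Matrix.smul_mul, hVV]
        module
end
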